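/- arXiv:2512.19411 — 3 statements merged into one kernel-verified Lean document; each statement's English description precedes it below -/
import Mathlib

section
/- Let H be a complex Hilbert space, Y a complex Banach space, U : B(H) → Y a non-null bounded linear operator with ‖U‖ < λ. Then for every n ∈ ℕ: AP_λ(B_{ℓ^n_1},1,U) = R_λ(𝔻,1,U)/n. -/
open scoped BigOperators ENNReal NNReal Pointwise
open Finset

noncomputable section

namespace ArithBohr

/-- The monomial `z ^ α` on `ℂ^n`. -/
def mono {n : ℕ} (z : Fin n → ℂ) (α : Fin n → ℕ) : ℂ := ∏ i, z i ^ α i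

/-- The real monomial `r ^ α`. -/
def monoR {n : ℕ} (r : Fin n → ℝ) (α : Fin n → ℕ) : ℝ := ∏ i, r i ^ α i

/-- `‖f‖_Ω = sup_{z ∈ Ω} ‖f z‖`. -/
def supNorm {n : ℕ} {E : Type*} [Norm E] (Ω : Set (Fin n → ℂ)) (f : (Fin n → ℂ) → E) : ℝ :=
  ⨆ z : Ω, ‖f z.1‖

/-- `f` is bounded on `Ω`. -/
def IsBoundedOn {n : ℕ} {E : Type*} [Norm E] (Ω : Set (Fin n → ℂ)) (f : (Fin n → ℂ) → E) :
    Prop :=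
  ∃ M : ℝ, ∀ z ∈ Ω, ‖f z‖ ≤ M

/-- A complete Reinhardt set in `ℂ^n`. -/
def IsCompleteReinhardt {n : ℕ} (Ω : Set (Fin n → ℂ)) : Prop :=
  ∀ z ∈ Ω, ∀ ξ : Fin n → ℂ, (∀ i, ‖ξ i‖ ≤ 1) → (fun i => ξ i * z i) ∈ Ω

/-- The `ℓ_q` norm on `ℂ^n`, `q ∈ [1,∞]` (as an extended real exponent). -/
def lqNorm {n : ℕ} (q : ℝ≥0∞) (z : Fin n → ℂ) : ℝ :=
  if q = ∞ then ⨆ i, ‖z i‖ else (∑ i, ‖z i‖ ^ q.toReal) ^ (1 / q.toReal)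

/-- The `ℓ_q` norm on `ℂ^n` for a real exponent `1 ≤ q < ∞`. -/
def lqNormR {n : ℕ} (q : ℝ) (z : Fin n → ℂ) : ℝ := (∑ i, ‖z i‖ ^ q) ^ (1 / q)

/-- The open unit ball of `ℓ^n_q`. -/
def lqBall (n : ℕ) (q : ℝ≥0∞) : Set (Fin n → ℂ) := {z | lqNorm q z < 1}

/-- The open unit ball of `ℓ^n_q` for a real exponent. -/
def lqBallR (n : ℕ) (q : ℝ) : Set (Fin n → ℂ) := {z | lqNormR q z < 1}

/-- The open unit ball of `ℓ^n_1`. -/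
def l1Ball (n : ℕ) : Set (Fin n → ℂ) := {z | ∑ i, ‖z i‖ < 1}

/-- `S(Ω₁, Ω₂) = inf {s > 0 : Ω₁ ⊆ s Ω₂}`. -/
def Sdist {n : ℕ} (Ω₁ Ω₂ : Set (Fin n → ℂ)) : ℝ := sInf {s : ℝ | 0 < s ∧ Ω₁ ⊆ s • Ω₂}

/-- A norm on `ℂ^n` for which the canonical basis is `1`-unconditional. -/
structure UncondNorm (n : ℕ) where
  N : (Fin n → ℂ) → ℝ
  eq_zero_iff : ∀ z, N z = 0 ↔ z = 0
  add_le : ∀ z w, N (z + w) ≤ N z + N w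
  smul_eq : ∀ (c : ℂ) (z), N (c • z) = ‖c‖ * N z
  uncond : ∀ ξ z : Fin n → ℂ, (∀ i, ‖ξ i‖ ≤ 1) → N (fun i => ξ i * z i) ≤ N z

namespace UncondNorm

variable {n : ℕ} (Z : UncondNorm n)

/-- The open unit ball `B_Z`. -/
def ball : Set (Fin n → ℂ) := {z | Z.N z < 1}

/-- `‖Id : Z → ℓ^n_q‖ = sup_{z ∈ B_Z} ‖z‖_q`. -/
def toLq (q : ℝ≥0∞) : ℝ := ⨆ z : Z.ball, lqNorm q z.1

/-- `‖Id : ℓ^n_q → Z‖ = sup_{‖z‖_q ≤ 1} ‖z‖_Z`. -/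
def fromLq (q : ℝ≥0∞) : ℝ := ⨆ z : {w : Fin n → ℂ | lqNorm q w ≤ 1}, Z.N z.1

/-- `‖Id : Z → ℓ^n_1‖ = sup_{z ∈ B_Z} Σ_i |z_i|`. -/
def toL1 : ℝ := ⨆ z : Z.ball, ∑ i, ‖z.1 i‖

/-- `‖Id : ℓ^n_2 → Z‖`. -/
def fromL2 : ℝ := ⨆ z : {w : Fin n → ℂ | Real.sqrt (∑ i, ‖w i‖ ^ 2) ≤ 1}, Z.N z.1

/-- `sup_{z ∈ B_Z} ‖z‖_p` for a real exponent `p`. -/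
def supLp (p : ℝ) : ℝ := ⨆ z : Z.ball, lqNormR p z.1

end UncondNorm

section Pluriharmonic

variable {n : ℕ} {H : Type*} [NormedAddCommGroup H] [InnerProductSpace ℂ H] [CompleteSpace H]
variable {Y : Type*} [NormedAddCommGroup Y] [NormedSpace ℂ Y]

/-- `f : Ω → B(H)` is (representable as) a pluriharmonic function with coefficient
families `a`, `b`:  `f z = Σ_α a_α z^α + Σ_{|α| ≥ 1} b_α^* z̄^α` on `Ω`. -/
def Represents (Ω : Set (Fin n → ℂ)) (f : (Fin n → ℂ) → (H →L[ℂ] H))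
    (a b : (Fin n → ℕ) → (H →L[ℂ] H)) : Prop :=
  b 0 = 0 ∧ ∀ z ∈ Ω,
    Summable (fun α => mono z α • a α) ∧
    Summable (fun α => mono (star z) α • (ContinuousLinearMap.adjoint (b α))) ∧
    f z = (∑' α, mono z α • a α) +
      ∑' α, mono (star z) α • (ContinuousLinearMap.adjoint (b α))

/-- The class `PH(Ω, B(H))` of bounded pluriharmonic functions (with their coefficients). -/
def ClsPH (Ω : Set (Fin n → ℂ)) (f : (Fin n → ℂ) → (H →L[ℂ] H))
    (a b : (Fin n → ℕ) → (H →L[ℂ] H)) : Prop :=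
  Represents Ω f a b ∧ IsBoundedOn Ω f

/-- The class `PH(^mΩ, B(H))` of `m`-homogeneous pluriharmonic polynomials. -/
def ClsHomog (Ω : Set (Fin n → ℂ)) (m : ℕ) (f : (Fin n → ℂ) → (H →L[ℂ] H))
    (a b : (Fin n → ℕ) → (H →L[ℂ] H)) : Prop :=
  ClsPH Ω f a b ∧ ∀ α : Fin n → ℕ, (∑ i, α i) ≠ m → a α = 0 ∧ b α = 0

/-- The class `∪_{m ≥ 1} PH(^mΩ, B(H))`. -/
def ClsHomogUnion (Ω : Set (Fin n → ℂ)) (f : (Fin n → ℂ) → (H →L[ℂ] H))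
    (a b : (Fin n → ℕ) → (H →L[ℂ] H)) : Prop :=
  ∃ m : ℕ, 1 ≤ m ∧ ClsHomog Ω m f a b

/-- The class `PH*(Ω, B(H))` of bounded pluriharmonic `f` with `f(0) = μ I`,
`μ ∈ [0, ‖f‖_Ω]`. -/
def ClsPHStar (Ω : Set (Fin n → ℂ)) (f : (Fin n → ℂ) → (H →L[ℂ] H))
    (a b : (Fin n → ℕ) → (H →L[ℂ] H)) : Prop :=
  ClsPH Ω f a b ∧ ∃ μ : ℝ, 0 ≤ μ ∧ μ ≤ supNorm Ω f ∧ f 0 = (μ : ℂ) • (1 : H →L[ℂ] H)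

/-- The vector `r ∈ ℝ^n_{≥0}` witnesses the arithmetic Bohr inequality for the class `Cls`:
`Σ_α (‖U a_α‖^p + ‖U b_α‖^p) r^{pα} ≤ λ^p ‖f‖_Ω^p` for every `f` in the class. -/
def GoodVec (Ω : Set (Fin n → ℂ)) (p lam : ℝ) (U : (H →L[ℂ] H) →L[ℂ] Y)
    (Cls : ((Fin n → ℂ) → (H →L[ℂ] H)) → ((Fin n → ℕ) → (H →L[ℂ] H)) →
      ((Fin n → ℕ) → (H →L[ℂ] H)) → Prop) (r : Fin n → ℝ) : Prop :=
  ∀ f a b, Cls f a b → ∀ F : Finset (Fin n → ℕ),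
    ∑ α ∈ F, (‖U (a α)‖ ^ p + ‖U (b α)‖ ^ p) * monoR r α ^ p ≤ lam ^ p * supNorm Ω f ^ p

/-- The `λ_p`-arithmetic Bohr radius of `Ω` with respect to a class of pluriharmonic
functions. -/
def APgen (Ω : Set (Fin n → ℂ)) (p lam : ℝ) (U : (H →L[ℂ] H) →L[ℂ] Y)
    (Cls : ((Fin n → ℂ) → (H →L[ℂ] H)) → ((Fin n → ℕ) → (H →L[ℂ] H)) →
      ((Fin n → ℕ) → (H →L[ℂ] H)) → Prop) : ℝ :=
  sSup {t : ℝ | ∃ r : Fin n → ℝ, (∀ i, 0 ≤ r i) ∧ GoodVec Ω p lam U Cls r ∧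
    t = (∑ i, r i) / n}

/-- The `λ_p`-arithmetic Bohr radius `AP_λ(Ω, p, U)`. -/
def APradius (Ω : Set (Fin n → ℂ)) (p lam : ℝ) (U : (H →L[ℂ] H) →L[ℂ] Y) : ℝ :=
  APgen Ω p lam U (ClsPH Ω)

/-- The `λ`-powered Bohr radius `R_λ(Ω, p, U)`. -/
def BohrRadius (Ω : Set (Fin n → ℂ)) (p lam : ℝ) (U : (H →L[ℂ] H) →L[ℂ] Y) : ℝ :=
  sSup {r : ℝ | 0 ≤ r ∧ ∀ f a b, ClsPH Ω f a b → ∀ z ∈ Ω, ∀ F : Finset (Fin n → ℕ),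
    ∑ α ∈ F, (‖U (a α)‖ ^ p + ‖U (b α)‖ ^ p) * ‖mono (r • z) α‖ ^ p
      ≤ lam ^ p * supNorm Ω f ^ p}

/-- `sup_{|z| < 1} ‖f z‖`. -/
def supNormDisk {E : Type*} [Norm E] (f : ℂ → E) : ℝ := ⨆ z : {w : ℂ // ‖w‖ < 1}, ‖f z.1‖

/-- `f` is bounded on the unit disk. -/
def IsBoundedOnDisk {E : Type*} [Norm E] (f : ℂ → E) : Prop :=
  ∃ M : ℝ, ∀ z : ℂ, ‖z‖ < 1 → ‖f z‖ ≤ M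

/-- `f : 𝔻 → B(H)` is pluriharmonic with coefficients `a`, `b`:
`f z = Σ_m a_m z^m + Σ_{m ≥ 1} b_m^* z̄^m`. -/
def RepresentsDisk (f : ℂ → (H →L[ℂ] H)) (a b : ℕ → (H →L[ℂ] H)) : Prop :=
  b 0 = 0 ∧ ∀ z : ℂ, ‖z‖ < 1 →
    Summable (fun m => z ^ m • a m) ∧
    Summable (fun m => (starRingEnd ℂ z) ^ m • (ContinuousLinearMap.adjoint (b m))) ∧
    f z = (∑' m, z ^ m • a m) +
      ∑' m, (starRingEnd ℂ z) ^ m • (ContinuousLinearMap.adjoint (b m))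

/-- The one-dimensional `λ`-powered Bohr radius `R_λ(𝔻, p, U)`. -/
def BohrRadiusDisk (p lam : ℝ) (U : (H →L[ℂ] H) →L[ℂ] Y) : ℝ :=
  sSup {r : ℝ | 0 ≤ r ∧ ∀ f a b, RepresentsDisk f a b → IsBoundedOnDisk f →
    ∀ F : Finset ℕ, ∑ m ∈ F, (‖U (a m)‖ ^ p + ‖U (b m)‖ ^ p) * r ^ ((m : ℝ) * p)
      ≤ lam ^ p * supNormDisk f ^ p}

end Pluriharmonic

section Scalar

variable {n : ℕ}

/-- A complex-valued harmonic function on the unit disk, via its representation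
`f z = Σ_m a_m z^m + conj (Σ_{m ≥ 1} b_m z^m)`. -/
def RepresentsDiskC (f : ℂ → ℂ) (a b : ℕ → ℂ) : Prop :=
  b 0 = 0 ∧ ∀ z : ℂ, ‖z‖ < 1 →
    Summable (fun m => a m * z ^ m) ∧ Summable (fun m => b m * z ^ m) ∧
    f z = (∑' m, a m * z ^ m) + starRingEnd ℂ (∑' m, b m * z ^ m)

/-- The scalar one-dimensional Bohr radius `R_λ(𝔻, 1, ℂ)` for harmonic functions. -/
def BohrRadiusDiskC (lam : ℝ) : ℝ :=
  sSup {r : ℝ | 0 ≤ r ∧ ∀ f a b, RepresentsDiskC f a b → IsBoundedOnDisk f →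
    ∀ F : Finset ℕ, ∑ m ∈ F, (‖a m‖ + ‖b m‖) * r ^ m ≤ lam * supNormDisk f}

/-- A complex-valued pluriharmonic function on `Ω ⊆ ℂ^n`, via its representation
`f z = Σ_α a_α z^α + conj (Σ_{|α| ≥ 1} b_α z^α)`. -/
def RepresentsC (Ω : Set (Fin n → ℂ)) (f : (Fin n → ℂ) → ℂ) (a b : (Fin n → ℕ) → ℂ) :
    Prop :=
  b 0 = 0 ∧ ∀ z ∈ Ω,
    Summable (fun α => a α * mono z α) ∧ Summable (fun α => b α * mono z α) ∧
    f z = (∑' α, a α * mono z α) + starRingEnd ℂ (∑' α, b α * mono z α)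

/-- The scalar arithmetic Bohr radius `AP_λ(Ω, 1, ℂ)` for pluriharmonic functions. -/
def APradiusC (Ω : Set (Fin n → ℂ)) (lam : ℝ) : ℝ :=
  sSup {t : ℝ | ∃ r : Fin n → ℝ, (∀ i, 0 ≤ r i) ∧
    (∀ f a b, RepresentsC Ω f a b → IsBoundedOn Ω f →
      ∀ F : Finset (Fin n → ℕ), ∑ α ∈ F, (‖a α‖ + ‖b α‖) * monoR r α ≤ lam * supNorm Ω f) ∧
    t = (∑ i, r i) / n}

end Scalar

section Holomorphic

variable {n : ℕ} {X : Type*} [NormedAddCommGroup X] [NormedSpace ℂ X]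
variable {Y : Type*} [NormedAddCommGroup Y] [NormedSpace ℂ Y]

/-- `f : Ω → X` has the monomial expansion `f z = Σ_α a_α z^α` on `Ω`. -/
def RepresentsHol (Ω : Set (Fin n → ℂ)) (f : (Fin n → ℂ) → X)
    (a : (Fin n → ℕ) → X) : Prop :=
  ∀ z ∈ Ω, HasSum (fun α => mono z α • a α) (f z)

/-- The `λ`-powered Bohr radius `K_λ(Ω, p, U)` for holomorphic functions. -/
def Kradius (Ω : Set (Fin n → ℂ)) (p lam : ℝ) (U : X →L[ℂ] Y) : ℝ :=
  sSup {r : ℝ | 0 ≤ r ∧ ∀ f a, RepresentsHol Ω f a → IsBoundedOn Ω f →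
    ∀ z ∈ Ω, ∀ F : Finset (Fin n → ℕ),
      ∑ α ∈ F, ‖mono (r • z) α • U (a α)‖ ^ p ≤ lam ^ p * supNorm Ω f ^ p}

/-- The `λ_p`-arithmetic Bohr radius `A_λ(Ω, p, U)` for holomorphic functions. -/
def Aradius (Ω : Set (Fin n → ℂ)) (p lam : ℝ) (U : X →L[ℂ] Y) : ℝ :=
  sSup {t : ℝ | ∃ r : Fin n → ℝ, (∀ i, 0 ≤ r i) ∧
    (∀ f a, RepresentsHol Ω f a → IsBoundedOn Ω f →
      ∀ F : Finset (Fin n → ℕ),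
        ∑ α ∈ F, ‖U (a α)‖ ^ p * monoR r α ^ p ≤ lam ^ p * supNorm Ω f ^ p) ∧
    t = (∑ i, r i) / n}

/-- `f : 𝔻 → X` has the power-series expansion `f z = Σ_m a_m z^m`. -/
def RepresentsHolDisk (f : ℂ → X) (a : ℕ → X) : Prop :=
  ∀ z : ℂ, ‖z‖ < 1 → HasSum (fun m => z ^ m • a m) (f z)

/-- The one-dimensional `λ`-powered Bohr radius `K_λ(𝔻, p, U)`. -/
def KradiusDisk (p lam : ℝ) (U : X →L[ℂ] Y) : ℝ :=
  sSup {r : ℝ | 0 ≤ r ∧ ∀ f a, RepresentsHolDisk f a → IsBoundedOnDisk f →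
    ∀ F : Finset ℕ, ∑ m ∈ F, ‖U (a m)‖ ^ p * r ^ ((m : ℝ) * p) ≤ lam ^ p * supNormDisk f ^ p}

end Holomorphic

/-- `X` has cotype `t ∈ [2, ∞)`. -/
def HasCotype (X : Type*) [NormedAddCommGroup X] (t : ℝ) : Prop :=
  ∃ C : ℝ, 0 < C ∧ ∀ (m : ℕ) (x : Fin m → X),
    (∑ k, ‖x k‖ ^ t) ^ (1 / t) ≤
      C * Real.sqrt ((2 ^ m : ℝ)⁻¹ * ∑ ε : Fin m → Bool, ‖∑ k, (if ε k then x k else -x k)‖ ^ 2)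

/-- `Cot(X) = inf {t ∈ [2, ∞] : X has cotype t}` (every space has cotype `∞`). -/
def cotype (X : Type*) [NormedAddCommGroup X] : ℝ≥0∞ :=
  sInf {t : ℝ≥0∞ | 2 ≤ t ∧ (t ≠ ∞ → HasCotype X t.toReal)}

/-- `X` has cotype `t ∈ [2, ∞]` (extended-real exponent; cotype `∞` always holds). -/
def HasCotypeE (X : Type*) [NormedAddCommGroup X] (t : ℝ≥0∞) : Prop :=
  t = ∞ ∨ HasCotype X t.toReal

/-- The constant `D` of Theorem 1.1 / Theorem `thm-1.8-atm`. -/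
def Dconst (p lam u : ℝ) : ℝ :=
  if (4 * lam * (2 : ℝ) ^ (1 / p))⁻¹ ≤ u then
    max ((4 * lam * (2 : ℝ) ^ (1 / p))⁻¹ * ((lam ^ p - u ^ p) / (2 * lam ^ p - u ^ p)) ^ (1 / p))
      ((4 * lam * (2 : ℝ) ^ (1 / p))⁻¹ *
        ((lam ^ p - u ^ p) / (lam ^ p - u ^ p + 1)) ^ (1 / p) * u⁻¹)
  else
    max ((4 * lam * (2 : ℝ) ^ (1 / p))⁻¹ * ((lam ^ p - u ^ p) / (2 * lam ^ p - u ^ p)) ^ (1 / p))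
      ((4 * lam * (2 : ℝ) ^ (1 / p))⁻¹ * ((lam ^ p - u ^ p) / (lam ^ p - u ^ p + 1)) ^ (1 / p))

end ArithBohr

namespace ArithBohr

section Statement14Aux

variable {n : ℕ}

private lemma zero_mem_l1Ball (n : ℕ) : (0 : Fin n → ℂ) ∈ l1Ball n := by
  simp [l1Ball]

private lemma le_supNorm {E : Type*} [Norm E] {Ω : Set (Fin n → ℂ)}
    {f : (Fin n → ℂ) → E} (hb : IsBoundedOn Ω f) {z : Fin n → ℂ} (hz : z ∈ Ω) :
    ‖f z‖ ≤ supNorm Ω f := by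
  obtain ⟨M, hM⟩ := hb
  exact le_ciSup ⟨M, by rintro x ⟨w, rfl⟩; exact hM w.1 w.2⟩ (⟨z, hz⟩ : Ω)

private lemma le_supNormDisk {E : Type*} [Norm E] {f : ℂ → E}
    (hb : IsBoundedOnDisk f) {w : ℂ} (hw : ‖w‖ < 1) : ‖f w‖ ≤ supNormDisk f := by
  obtain ⟨M, hM⟩ := hb
  exact le_ciSup ⟨M, by rintro x ⟨v, rfl⟩; exact hM v.1 v.2⟩ (⟨w, hw⟩ : {v : ℂ // ‖v‖ < 1})

private lemma prod_single_pow {M : Type*} [CommMonoid M] (i0 : Fin n) (v : Fin n → M) (m : ℕ) :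
    (∏ i, v i ^ (if i = i0 then m else 0)) = v i0 ^ m := by
  rw [Finset.prod_eq_single i0 (fun i _ hi => by rw [if_neg hi, pow_zero])
    (fun h => absurd (Finset.mem_univ i0) h), if_pos rfl]

private lemma exists_off_single {i0 : Fin n} {α : Fin n → ℕ}
    (hα : ∀ m : ℕ, α ≠ fun i => if i = i0 then m else 0) : ∃ i, i ≠ i0 ∧ α i ≠ 0 := by
  by_contra h
  push_neg at h
  exact hα (α i0) (funext fun i => by
    by_cases hi : i = i0
    · simp [hi]
    · simp [hi, h i hi])

private lemma prod_pow_eq_zero_off {M : Type*} [CommMonoidWithZero M] {i0 : Fin n}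
    {v : Fin n → M} (hv : ∀ i, i ≠ i0 → v i = 0) {α : Fin n → ℕ}
    (hα : ∀ m : ℕ, α ≠ fun i => if i = i0 then m else 0) : (∏ i, v i ^ α i) = 0 := by
  obtain ⟨i, hi, hαi⟩ := exists_off_single hα
  exact Finset.prod_eq_zero (Finset.mem_univ i) (by rw [hv i hi, zero_pow hαi])

private lemma finite_fiber (m : ℕ) : Finite {α : Fin n → ℕ // ∑ i, α i = m} := by
  classical
  have h : {α : Fin n → ℕ | ∑ i, α i = m}.Finite :=
    Set.Finite.ofFinset (Finset.piAntidiag Finset.univ m)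
      (by intro α; simp [Finset.mem_piAntidiag])
  exact h.to_subtype

private lemma tsum_fiber_eq {M : Type*} [AddCommMonoid M] [TopologicalSpace M] [T2Space M]
    (m : ℕ) (g : (Fin n → ℕ) → M) :
    ∑' y : {α : Fin n → ℕ // ∑ i, α i = m}, g y.1
      = ∑ α ∈ Finset.piAntidiag Finset.univ m, g α := by
  classical
  haveI := finite_fiber (n := n) m
  haveI := Fintype.ofFinite {α : Fin n → ℕ // ∑ i, α i = m}
  rw [tsum_fintype]
  exact (Finset.sum_subtype _ (by intro x; simp [Finset.mem_piAntidiag]) g).symm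

set_option maxHeartbeats 1000000 in
private lemma multinomial_lift {E : Type*} [NormedAddCommGroup E] [NormedSpace ℂ E]
    [CompleteSpace E] (c : ℕ → E) (z : Fin n → ℂ) (hz : ∑ i, ‖z i‖ < 1)
    (hsum : ∀ x : ℂ, ‖x‖ < 1 → Summable fun m => x ^ m • c m) :
    Summable (fun α : Fin n → ℕ =>
        mono z α • (((Nat.multinomial Finset.univ α : ℕ) : ℂ) • c (∑ i, α i))) ∧
      ∑' α : Fin n → ℕ, mono z α • (((Nat.multinomial Finset.univ α : ℕ) : ℂ) • c (∑ i, α i))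
        = ∑' m : ℕ, (∑ i, z i) ^ m • c m := by
  classical
  set G : (Fin n → ℕ) → E := fun α =>
    mono z α • (((Nat.multinomial Finset.univ α : ℕ) : ℂ) • c (∑ i, α i)) with hG
  set t : ℝ := ∑ i, ‖z i‖ with ht
  have ht0 : 0 ≤ t := Finset.sum_nonneg fun i _ => norm_nonneg _
  have ht1 : t < 1 := hz
  set ρ : ℝ := (1 + t) / 2 with hρ
  have htρ : t < ρ := by rw [hρ]; linarith
  have hρ1 : ρ < 1 := by rw [hρ]; linarith
  have hρ0 : 0 < ρ := by rw [hρ]; linarith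
  have hρℂ : ‖(ρ : ℂ)‖ < 1 := by
    rw [Complex.norm_real, Real.norm_of_nonneg hρ0.le]; exact hρ1
  obtain ⟨C, hC⟩ : ∃ C : ℝ, ∀ m, ‖((ρ : ℂ)) ^ m • c m‖ ≤ C := by
    obtain ⟨C, hC⟩ := (hsum (ρ : ℂ) hρℂ).tendsto_atTop_zero.norm.bddAbove_range
    exact ⟨C, fun m => hC ⟨m, rfl⟩⟩
  have hρC : ∀ m, ρ ^ m * ‖c m‖ ≤ C := by
    intro m
    have h := hC m
    rwa [norm_smul, norm_pow, Complex.norm_real, Real.norm_of_nonneg hρ0.le] at h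
  have hnorm : ∀ m : ℕ, ∀ α ∈ Finset.piAntidiag (Finset.univ : Finset (Fin n)) m,
      ‖G α‖ = (Nat.multinomial Finset.univ α : ℝ) * (∏ i, ‖z i‖ ^ α i) * ‖c m‖ := by
    intro m α hα
    have hαm : (∑ i, α i) = m := (Finset.mem_piAntidiag.1 hα).1
    rw [hG]
    simp only [norm_smul, Complex.norm_natCast]
    have hm : ‖mono z α‖ = ∏ i, ‖z i‖ ^ α i := by
      rw [mono, norm_prod]
      exact Finset.prod_congr rfl fun i _ => norm_pow _ _
    rw [hm, hαm]
    ring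
  have hfibernorm : ∀ m : ℕ,
      (∑ α ∈ Finset.piAntidiag (Finset.univ : Finset (Fin n)) m, ‖G α‖) = t ^ m * ‖c m‖ := by
    intro m
    rw [Finset.sum_congr rfl (hnorm m), ← Finset.sum_mul, ht,
      Finset.sum_pow_eq_sum_piAntidiag]
  set e := Equiv.sigmaFiberEquiv (fun α : Fin n → ℕ => ∑ i, α i) with he
  haveI : ∀ m : ℕ, Finite {α : Fin n → ℕ // ∑ i, α i = m} := finite_fiber
  have hfibersum : ∀ m : ℕ, Summable fun y : {α : Fin n → ℕ // ∑ i, α i = m} => G y.1 := by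
    intro m
    haveI := Fintype.ofFinite {α : Fin n → ℕ // ∑ i, α i = m}
    exact (hasSum_fintype _).summable
  have hgeom : Summable fun m : ℕ => C * (t / ρ) ^ m :=
    Summable.mul_left C (summable_geometric_of_lt_one (div_nonneg ht0 hρ0.le)
      ((div_lt_one hρ0).2 htρ))
  have hnormsum : Summable fun α => ‖G α‖ := by
    rw [← e.summable_iff]
    apply (summable_sigma_of_nonneg fun _ => norm_nonneg _).2
    constructor
    · intro m
      haveI := Fintype.ofFinite {α : Fin n → ℕ // ∑ i, α i = m}
      exact (hasSum_fintype _).summable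
    · apply Summable.of_nonneg_of_le (fun m => tsum_nonneg fun y => norm_nonneg _)
        (fun m => ?_) hgeom
      calc (∑' y : {α : Fin n → ℕ // ∑ i, α i = m}, ((fun α => ‖G α‖) ∘ e) ⟨m, y⟩)
          = ∑' y : {α : Fin n → ℕ // ∑ i, α i = m}, ‖G y.1‖ := tsum_congr fun y => rfl
        _ = t ^ m * ‖c m‖ :=
            (tsum_fiber_eq m fun α => ‖G α‖).trans (hfibernorm m)
        _ = ((t / ρ) ^ m * ρ ^ m) * ‖c m‖ := by
            rw [div_pow, div_mul_cancel₀ _ (pow_ne_zero m hρ0.ne')]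
        _ = (t / ρ) ^ m * (ρ ^ m * ‖c m‖) := by ring
        _ ≤ (t / ρ) ^ m * C := mul_le_mul_of_nonneg_left (hρC m) (by positivity)
        _ = C * (t / ρ) ^ m := mul_comm _ _
  have hGsum : Summable G := hnormsum.of_norm
  refine ⟨hGsum, ?_⟩
  calc ∑' α, G α
      = ∑' p : (Σ m : ℕ, {α : Fin n → ℕ // ∑ i, α i = m}), G (e p) := (e.tsum_eq G).symm
    _ = ∑' m : ℕ, ∑' y : {α : Fin n → ℕ // ∑ i, α i = m}, G (e ⟨m, y⟩) :=
        Summable.tsum_sigma' (fun m => hfibersum m) (e.summable_iff.2 hGsum)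
    _ = ∑' m : ℕ, (∑ i, z i) ^ m • c m := by
        refine tsum_congr fun m => ?_
        have h4 : (∑' y : {α : Fin n → ℕ // ∑ i, α i = m}, G (e ⟨m, y⟩))
            = ∑ α ∈ Finset.piAntidiag Finset.univ m, G α :=
          (tsum_congr fun y => rfl : _ = ∑' y : {α : Fin n → ℕ // ∑ i, α i = m}, G y.1).trans
            (tsum_fiber_eq m G)
        rw [h4]
        have h5 : ∀ α ∈ Finset.piAntidiag (Finset.univ : Finset (Fin n)) m,
            G α = (((Nat.multinomial Finset.univ α : ℕ) : ℂ) * mono z α) • c m := by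
          intro α hα
          have hαm : (∑ i, α i) = m := (Finset.mem_piAntidiag.1 hα).1
          rw [hG]
          simp only
          rw [smul_smul, mul_comm (mono z α) _, hαm]
        rw [Finset.sum_congr rfl h5, ← Finset.sum_smul]
        congr 1
        rw [Finset.sum_pow_eq_sum_piAntidiag Finset.univ z m]
        exact (Finset.sum_congr rfl fun α _ => by rw [mono]).symm

private def sliceIdx (i0 : Fin n) (m : ℕ) : Fin n → ℕ := fun i => if i = i0 then m else 0

private lemma sliceIdx_inj (i0 : Fin n) : Function.Injective (sliceIdx (n := n) i0) := by
  intro m m' h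
  simpa [sliceIdx] using congrFun h i0

private lemma sliceIdx_zero (i0 : Fin n) : sliceIdx i0 0 = 0 :=
  funext fun i => by unfold sliceIdx; split <;> rfl

private lemma sliceIdx_apply (i0 : Fin n) (m : ℕ) : sliceIdx i0 m i0 = m := by
  simp [sliceIdx]

private lemma mono_slice (i0 : Fin n) (v : Fin n → ℂ) (m : ℕ) :
    mono v (sliceIdx i0 m) = v i0 ^ m := by
  rw [mono]; exact prod_single_pow i0 v m

private lemma mono_off_slice {i0 : Fin n} {v : Fin n → ℂ}
    (hv : ∀ i, i ≠ i0 → v i = 0) {α : Fin n → ℕ}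
    (hα : α ∉ Set.range (sliceIdx (n := n) i0)) : mono v α = 0 := by
  rw [mono]
  exact prod_pow_eq_zero_off hv fun m hm => hα ⟨m, hm.symm⟩

private lemma monoR_slice (i0 : Fin n) (v : Fin n → ℝ) (m : ℕ) :
    monoR v (sliceIdx i0 m) = v i0 ^ m := by
  rw [monoR]; exact prod_single_pow i0 v m

private lemma monoR_off_slice {i0 : Fin n} {v : Fin n → ℝ}
    (hv : ∀ i, i ≠ i0 → v i = 0) {α : Fin n → ℕ}
    (hα : α ∉ Set.range (sliceIdx (n := n) i0)) : monoR v α = 0 := by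
  rw [monoR]
  exact prod_pow_eq_zero_off hv fun m hm => hα ⟨m, hm.symm⟩

private lemma slice_mem (i0 : Fin n) {w : ℂ} (hw : ‖w‖ < 1) :
    (fun i => if i = i0 then w else 0) ∈ l1Ball n := by
  show (∑ i, ‖if i = i0 then w else 0‖) < 1
  have h : ∀ i : Fin n, ‖if i = i0 then w else 0‖ = if i = i0 then ‖w‖ else 0 := fun i => by
    split <;> simp
  rw [Finset.sum_congr rfl fun i _ => h i,
    Finset.sum_ite_eq' Finset.univ i0 fun _ => ‖w‖, if_pos (Finset.mem_univ i0)]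
  exact hw

variable {H : Type*} [NormedAddCommGroup H] [InnerProductSpace ℂ H] [CompleteSpace H]
variable {Y : Type*} [NormedAddCommGroup Y] [NormedSpace ℂ Y]

private lemma adjoint_natCast_smul (k : ℕ) (T : H →L[ℂ] H) :
    ContinuousLinearMap.adjoint ((k : ℂ) • T) = (k : ℂ) • ContinuousLinearMap.adjoint T := by
  rw [Nat.cast_smul_eq_nsmul ℂ, map_nsmul, Nat.cast_smul_eq_nsmul ℂ]

private lemma slice_repDisk (i0 : Fin n) {f : (Fin n → ℂ) → (H →L[ℂ] H)}
    {a b : (Fin n → ℕ) → (H →L[ℂ] H)} (hb0 : b 0 = 0)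
    (hrep : ∀ z ∈ l1Ball n, Summable (fun α => mono z α • a α) ∧
      Summable (fun α => mono (star z) α • (ContinuousLinearMap.adjoint (b α))) ∧
      f z = (∑' α, mono z α • a α)
        + ∑' α, mono (star z) α • (ContinuousLinearMap.adjoint (b α))) :
    RepresentsDisk (fun w => f (fun i => if i = i0 then w else 0))
      (fun m => a (sliceIdx i0 m)) (fun m => b (sliceIdx i0 m)) := by
  classical
  constructor
  · show b (sliceIdx i0 0) = 0
    rw [sliceIdx_zero, hb0]
  · intro w hw
    obtain ⟨S1, S2, hfz⟩ := hrep (fun i => if i = i0 then w else 0) (slice_mem i0 hw)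
    have hv : ∀ i, i ≠ i0 → (fun i => if i = i0 then w else 0) i = 0 := fun i hi => if_neg hi
    have hvs : ∀ i, i ≠ i0 → (star fun i => if i = i0 then w else 0) i = 0 := fun i hi => by
      show star (if i = i0 then w else 0) = 0
      rw [if_neg hi, star_zero]
    have hmono : ∀ m : ℕ, mono (fun i => if i = i0 then w else 0) (sliceIdx i0 m) = w ^ m := by
      intro m
      rw [mono_slice, if_pos rfl]
    have hmono2 : ∀ m : ℕ, mono (star fun i => if i = i0 then w else 0) (sliceIdx i0 m)
        = (starRingEnd ℂ w) ^ m := by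
      intro m
      rw [mono_slice]
      congr 1
      show star (if i0 = i0 then w else 0) = starRingEnd ℂ w
      rw [if_pos rfl, starRingEnd_apply]
    refine ⟨?_, ?_, ?_⟩
    · refine Summable.congr ((Function.Injective.summable_iff (sliceIdx_inj i0) ?_).2 S1) ?_
      · intro α hα
        rw [mono_off_slice hv hα, zero_smul]
      · intro m
        show mono (fun i => if i = i0 then w else 0) (sliceIdx i0 m) • a (sliceIdx i0 m) = _
        rw [hmono m]
    · refine Summable.congr ((Function.Injective.summable_iff (sliceIdx_inj i0) ?_).2 S2) ?_
      · intro α hα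
        rw [mono_off_slice hvs hα, zero_smul]
      · intro m
        show mono (star fun i => if i = i0 then w else 0) (sliceIdx i0 m)
          • ContinuousLinearMap.adjoint (b (sliceIdx i0 m)) = _
        rw [hmono2 m]
    · show f (fun i => if i = i0 then w else 0) = _
      rw [hfz]
      congr 1
      · rw [← Function.Injective.tsum_eq (sliceIdx_inj i0)
          (f := fun α => mono (fun i => if i = i0 then w else 0) α • a α) ?_]
        · exact tsum_congr fun m => by rw [hmono m]
        · intro α hα
          by_contra hr
          exact hα (show (mono (fun i => if i = i0 then w else 0) α • a α) = 0 from by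
            rw [mono_off_slice hv hr, zero_smul])
      · rw [← Function.Injective.tsum_eq (sliceIdx_inj i0)
          (f := fun α => mono (star fun i => if i = i0 then w else 0) α
            • ContinuousLinearMap.adjoint (b α)) ?_]
        · exact tsum_congr fun m => by rw [hmono2 m]
        · intro α hα
          by_contra hr
          exact hα (show (mono (star fun i => if i = i0 then w else 0) α
              • ContinuousLinearMap.adjoint (b α)) = 0 from by
            rw [mono_off_slice hvs hr, zero_smul])

private lemma lemA (U : (H →L[ℂ] H) →L[ℂ] Y) {lam : ℝ} (hlam : 1 ≤ lam) {n : ℕ}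
    {r : Fin n → ℝ} (hgood : GoodVec (l1Ball n) 1 lam U (ClsPH (l1Ball n)) r) :
    ∀ f a b, RepresentsDisk f a b → IsBoundedOnDisk f → ∀ F : Finset ℕ,
      ∑ m ∈ F, (‖U (a m)‖ + ‖U (b m)‖) * (∑ i, r i) ^ m ≤ lam * supNormDisk f := by
  classical
  intro f a b hrep hbdd F
  obtain ⟨hb0, hrep2⟩ := hrep
  obtain ⟨M, hM⟩ := hbdd
  have hmem : ∀ z ∈ l1Ball n, ‖∑ i, z i‖ < 1 := fun z hz =>
    lt_of_le_of_lt (norm_sum_le _ _) hz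
  have hboundg : IsBoundedOn (l1Ball n) (fun z : Fin n → ℂ => f (∑ i, z i)) :=
    ⟨M, fun z hz => hM _ (hmem z hz)⟩
  have hrepg : Represents (l1Ball n) (fun z : Fin n → ℂ => f (∑ i, z i))
      (fun α => ((Nat.multinomial Finset.univ α : ℕ) : ℂ) • a (∑ i, α i))
      (fun α => ((Nat.multinomial Finset.univ α : ℕ) : ℂ) • b (∑ i, α i)) := by
    constructor
    · show ((Nat.multinomial Finset.univ (0 : Fin n → ℕ) : ℕ) : ℂ)
        • b (∑ i, (0 : Fin n → ℕ) i) = 0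
      rw [show (∑ i, (0 : Fin n → ℕ) i) = 0 from by simp, hb0, smul_zero]
    · intro z hz
      have hz' : ∑ i, ‖z i‖ < 1 := hz
      have h1 := multinomial_lift a z hz' (fun x hx => (hrep2 x hx).1)
      have hzstar : ∑ i, ‖(star z) i‖ < 1 := by simpa using hz'
      have hsum2 : ∀ x : ℂ, ‖x‖ < 1 →
          Summable fun m => x ^ m • ContinuousLinearMap.adjoint (b m) := by
        intro x hx
        have h := (hrep2 (star x) (by simpa using hx)).2.1
        refine h.congr fun m => ?_
        rw [starRingEnd_apply, star_star]
      have h2 := multinomial_lift (fun m => ContinuousLinearMap.adjoint (b m)) (star z)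
        hzstar hsum2
      have hstar : (∑ i, (star z) i) = starRingEnd ℂ (∑ i, z i) := by
        rw [starRingEnd_apply, star_sum]
        rfl
      refine ⟨h1.1, ?_, ?_⟩
      · refine Summable.congr h2.1 fun α => ?_
        show mono (star z) α • (((Nat.multinomial Finset.univ α : ℕ) : ℂ)
            • ContinuousLinearMap.adjoint (b (∑ i, α i)))
          = mono (star z) α • ContinuousLinearMap.adjoint
            (((Nat.multinomial Finset.univ α : ℕ) : ℂ) • b (∑ i, α i))
        rw [adjoint_natCast_smul]
      · have hw := hmem z hz
        obtain ⟨-, -, hfw⟩ := hrep2 (∑ i, z i) hw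
        show f (∑ i, z i) = _
        rw [hfw]
        congr 1
        · exact h1.2.symm
        · calc ∑' m : ℕ, (starRingEnd ℂ (∑ i, z i)) ^ m • ContinuousLinearMap.adjoint (b m)
              = ∑' m : ℕ, (∑ i, (star z) i) ^ m • ContinuousLinearMap.adjoint (b m) := by
                rw [hstar]
            _ = ∑' α : Fin n → ℕ, mono (star z) α •
                (((Nat.multinomial Finset.univ α : ℕ) : ℂ)
                  • ContinuousLinearMap.adjoint (b (∑ i, α i))) := h2.2.symm
            _ = _ := tsum_congr fun α => by rw [adjoint_natCast_smul]
  have hsupg : supNorm (l1Ball n) (fun z : Fin n → ℂ => f (∑ i, z i)) ≤ supNormDisk f := by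
    haveI : Nonempty ↥(l1Ball n) := ⟨⟨0, zero_mem_l1Ball n⟩⟩
    exact ciSup_le fun z => le_supNormDisk ⟨M, hM⟩ (hmem z.1 z.2)
  have hdisj : (↑F : Set ℕ).PairwiseDisjoint
      (fun m => Finset.piAntidiag (Finset.univ : Finset (Fin n)) m) := by
    intro m1 _ m2 _ hne
    refine Finset.disjoint_left.2 fun α h1 h2 => hne ?_
    rw [← (Finset.mem_piAntidiag.1 h1).1, ← (Finset.mem_piAntidiag.1 h2).1]
  have hkey := hgood _ _ _ ⟨hrepg, hboundg⟩ (F.biUnion fun m => Finset.piAntidiag Finset.univ m)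
  simp only [Real.rpow_one] at hkey
  rw [Finset.sum_biUnion hdisj] at hkey
  have hinner : ∀ m ∈ F, (∑ α ∈ Finset.piAntidiag (Finset.univ : Finset (Fin n)) m,
      (‖U (((Nat.multinomial Finset.univ α : ℕ) : ℂ) • a (∑ i, α i))‖ +
       ‖U (((Nat.multinomial Finset.univ α : ℕ) : ℂ) • b (∑ i, α i))‖) * monoR r α)
      = (‖U (a m)‖ + ‖U (b m)‖) * (∑ i, r i) ^ m := by
    intro m _
    have hterm : ∀ α ∈ Finset.piAntidiag (Finset.univ : Finset (Fin n)) m,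
        (‖U (((Nat.multinomial Finset.univ α : ℕ) : ℂ) • a (∑ i, α i))‖ +
         ‖U (((Nat.multinomial Finset.univ α : ℕ) : ℂ) • b (∑ i, α i))‖) * monoR r α
        = ((Nat.multinomial Finset.univ α : ℝ) * ∏ i, r i ^ α i)
            * (‖U (a m)‖ + ‖U (b m)‖) := by
      intro α hα
      have hαm : (∑ i, α i) = m := (Finset.mem_piAntidiag.1 hα).1
      rw [hαm]
      simp only [map_smul, norm_smul, Complex.norm_natCast, monoR]
      ring
    rw [Finset.sum_congr rfl hterm, ← Finset.sum_mul, ← Finset.sum_pow_eq_sum_piAntidiag]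
    ring
  refine le_trans (le_of_eq ((Finset.sum_congr rfl hinner).symm))
    (le_trans hkey (mul_le_mul_of_nonneg_left hsupg (le_trans zero_le_one hlam)))

private lemma lemB (U : (H →L[ℂ] H) →L[ℂ] Y) {lam : ℝ} (hlam : 1 ≤ lam) {n : ℕ} (hn : 0 < n)
    {s : ℝ} (hs0 : 0 ≤ s)
    (hsB : ∀ f a b, RepresentsDisk f a b → IsBoundedOnDisk f → ∀ F : Finset ℕ,
      ∑ m ∈ F, (‖U (a m)‖ + ‖U (b m)‖) * s ^ m ≤ lam * supNormDisk f) :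
    GoodVec (l1Ball n) 1 lam U (ClsPH (l1Ball n))
      (fun i => if i = ⟨0, hn⟩ then s else 0) := by
  classical
  intro f a b hcls F
  simp only [Real.rpow_one]
  obtain ⟨⟨hb0, hrep⟩, M, hM⟩ := hcls
  set i0 : Fin n := ⟨0, hn⟩ with hi0
  have hvr : ∀ i, i ≠ i0 → (fun i => if i = i0 then s else (0:ℝ)) i = 0 := fun i hi => if_neg hi
  have hrepg := slice_repDisk i0 hb0 hrep
  have hbddg : IsBoundedOnDisk (fun w => f (fun i => if i = i0 then w else 0)) :=
    ⟨M, fun w hw => hM _ (slice_mem i0 hw)⟩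
  have hsupg : supNormDisk (fun w => f (fun i => if i = i0 then w else 0))
      ≤ supNorm (l1Ball n) f := by
    haveI : Nonempty {v : ℂ // ‖v‖ < 1} := ⟨⟨0, by simp⟩⟩
    exact ciSup_le fun w => le_supNorm ⟨M, hM⟩ (slice_mem i0 w.2)
  have hkey := hsB _ _ _ hrepg hbddg (F.image fun α => α i0)
  set P : (Fin n → ℕ) → Prop := fun α => α ∈ Set.range (sliceIdx (n := n) i0) with hP
  calc ∑ α ∈ F, (‖U (a α)‖ + ‖U (b α)‖) * monoR (fun i => if i = i0 then s else 0) α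
      = ∑ α ∈ F.filter P, (‖U (a α)‖ + ‖U (b α)‖)
          * monoR (fun i => if i = i0 then s else 0) α := by
        refine (Finset.sum_filter_of_ne fun α hα hne => ?_).symm
        by_contra hPα
        exact hne (by rw [monoR_off_slice hvr hPα, mul_zero])
    _ = ∑ α ∈ F.filter P, (‖U (a (sliceIdx i0 (α i0)))‖ + ‖U (b (sliceIdx i0 (α i0)))‖)
          * s ^ (α i0) := by
        refine Finset.sum_congr rfl fun α hα => ?_
        obtain ⟨m, rfl⟩ := (Finset.mem_filter.1 hα).2
        rw [sliceIdx_apply, monoR_slice, if_pos rfl]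
    _ = ∑ k ∈ (F.filter P).image (fun α => α i0),
          (‖U (a (sliceIdx i0 k))‖ + ‖U (b (sliceIdx i0 k))‖) * s ^ k := by
        refine (Finset.sum_image (g := fun α : Fin n → ℕ => α i0)
          (f := fun k => (‖U (a (sliceIdx i0 k))‖ + ‖U (b (sliceIdx i0 k))‖) * s ^ k)
          fun α hα β hβ hh => ?_).symm
        obtain ⟨m, rfl⟩ := (Finset.mem_filter.1 hα).2
        obtain ⟨m', rfl⟩ := (Finset.mem_filter.1 hβ).2
        have hh' : m = m' := by simpa [sliceIdx_apply] using hh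
        rw [hh']
    _ ≤ ∑ k ∈ F.image (fun α => α i0),
          (‖U (a (sliceIdx i0 k))‖ + ‖U (b (sliceIdx i0 k))‖) * s ^ k :=
        Finset.sum_le_sum_of_subset_of_nonneg
          (Finset.image_subset_image (Finset.filter_subset _ _))
          (fun k _ _ => by positivity)
    _ ≤ lam * supNormDisk (fun w => f (fun i => if i = i0 then w else 0)) := hkey
    _ ≤ lam * supNorm (l1Ball n) f :=
        mul_le_mul_of_nonneg_left hsupg (le_trans zero_le_one hlam)

end Statement14Aux

/-- Corollary `cor-1.8`: `AP_λ(B_{ℓ^n_1},1,U) = R_λ(𝔻,1,U)/n`. -/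
theorem statement14
    {H : Type*} [NormedAddCommGroup H] [InnerProductSpace ℂ H] [CompleteSpace H]
    {Y : Type*} [NormedAddCommGroup Y] [NormedSpace ℂ Y] [CompleteSpace Y]
    (U : (H →L[ℂ] H) →L[ℂ] Y) (hU : U ≠ 0)
    (lam : ℝ) (hlam : 1 ≤ lam) (hUlam : ‖U‖ < lam) :
    ∀ n : ℕ, 0 < n →
      APradius (l1Ball n) 1 lam U = BohrRadiusDisk 1 lam U / n := by
  intro n hn
  classical
  have hn' : (0:ℝ) < n := by exact_mod_cast hn
  have hlam0 : (0:ℝ) ≤ lam := le_trans zero_le_one hlam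
  obtain ⟨T, hT⟩ : ∃ T : H →L[ℂ] H, U T ≠ 0 := by
    by_contra h
    push_neg at h
    exact hU (ContinuousLinearMap.ext fun T => by simp [h T])
  have hAPdef : APradius (l1Ball n) 1 lam U
      = sSup {t : ℝ | ∃ r : Fin n → ℝ, (∀ i, 0 ≤ r i) ∧
          GoodVec (l1Ball n) (1:ℝ) lam U (ClsPH (l1Ball n)) r ∧ t = (∑ i, r i) / n} := rfl
  have hBRdef : BohrRadiusDisk (1:ℝ) lam U
      = sSup {x : ℝ | 0 ≤ x ∧ ∀ f a b, RepresentsDisk f a b → IsBoundedOnDisk f →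
          ∀ F : Finset ℕ, ∑ m ∈ F, (‖U (a m)‖ ^ (1:ℝ) + ‖U (b m)‖ ^ (1:ℝ))
              * x ^ ((m : ℝ) * (1:ℝ))
            ≤ lam ^ (1:ℝ) * supNormDisk f ^ (1:ℝ)} := rfl
  rw [hAPdef, hBRdef]
  set SA : Set ℝ := {t : ℝ | ∃ r : Fin n → ℝ, (∀ i, 0 ≤ r i) ∧
      GoodVec (l1Ball n) (1:ℝ) lam U (ClsPH (l1Ball n)) r ∧ t = (∑ i, r i) / n} with hSAdef
  set SB : Set ℝ := {x : ℝ | 0 ≤ x ∧ ∀ f a b, RepresentsDisk f a b → IsBoundedOnDisk f →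
      ∀ F : Finset ℕ, ∑ m ∈ F, (‖U (a m)‖ ^ (1:ℝ) + ‖U (b m)‖ ^ (1:ℝ))
          * x ^ ((m : ℝ) * (1:ℝ))
        ≤ lam ^ (1:ℝ) * supNormDisk f ^ (1:ℝ)} with hSBdef
  have hSBiff : ∀ x : ℝ, x ∈ SB ↔ (0 ≤ x ∧ ∀ (f : ℂ → (H →L[ℂ] H))
      (a b : ℕ → (H →L[ℂ] H)), RepresentsDisk f a b → IsBoundedOnDisk f →
      ∀ F : Finset ℕ, ∑ m ∈ F, (‖U (a m)‖ + ‖U (b m)‖) * x ^ m ≤ lam * supNormDisk f) := by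
    intro x
    rw [hSBdef]
    simp only [Set.mem_setOf_eq, Real.rpow_one, mul_one, Real.rpow_natCast]
  have hB0 : (0:ℝ) ∈ SB := by
    refine (hSBiff 0).2 ⟨le_rfl, fun f a b hrep hbdd F => ?_⟩
    have hsup0 : 0 ≤ supNormDisk f :=
      le_trans (norm_nonneg _) (le_supNormDisk hbdd (by simp : ‖(0:ℂ)‖ < 1))
    have ha0 : f 0 = a 0 := by
      obtain ⟨-, -, h0⟩ := hrep.2 0 (by simp)
      have e1 : ∑' m : ℕ, (0:ℂ) ^ m • a m = a 0 := by
        rw [tsum_eq_single 0 (fun m hm => by rw [zero_pow hm, zero_smul])]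
        simp
      have e2 : ∑' m : ℕ, (starRingEnd ℂ (0:ℂ)) ^ m
          • ContinuousLinearMap.adjoint (b m) = 0 := by
        have hc0 : starRingEnd ℂ (0:ℂ) = 0 := map_zero _
        rw [hc0, tsum_eq_single 0 (fun m hm => by rw [zero_pow hm, zero_smul])]
        simp [hrep.1]
      rw [h0, e1, e2, add_zero]
    have hterm : ∀ m ∈ F, m ≠ 0 → (‖U (a m)‖ + ‖U (b m)‖) * (0:ℝ) ^ m = 0 :=
      fun m _ hm => by rw [zero_pow hm, mul_zero]
    by_cases h0F : 0 ∈ F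
    · rw [Finset.sum_eq_single_of_mem 0 h0F (fun m hm hne => hterm m hm hne)]
      rw [pow_zero, mul_one, hrep.1, map_zero, norm_zero, add_zero, ← ha0]
      calc ‖U (f 0)‖ ≤ ‖U‖ * ‖f 0‖ := U.le_opNorm _
        _ ≤ lam * supNormDisk f :=
            mul_le_mul hUlam.le (le_supNormDisk hbdd (by simp : ‖(0:ℂ)‖ < 1))
              (norm_nonneg _) hlam0
    · rw [Finset.sum_eq_zero (fun m hm => hterm m hm (fun h => h0F (h ▸ hm)))]
      exact mul_nonneg hlam0 hsup0
  have hBbdd : BddAbove SB := by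
    refine ⟨lam * ‖T‖ / ‖U T‖, fun x hx => ?_⟩
    obtain ⟨hx0, hxB⟩ := (hSBiff x).1 hx
    have hrepT : RepresentsDisk (fun w : ℂ => w • T)
        (fun m => if m = 1 then T else 0) (fun _ => (0 : H →L[ℂ] H)) := by
      refine ⟨rfl, fun w hw => ⟨?_, ?_, ?_⟩⟩
      · refine summable_of_ne_finset_zero (s := ({1} : Finset ℕ)) fun m hm => ?_
        show w ^ m • (if m = 1 then T else 0) = 0
        rw [if_neg (by simpa using hm), smul_zero]
      · simp only [map_zero, smul_zero]
        exact summable_zero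
      · have e1 : ∑' m : ℕ, w ^ m • (if m = 1 then T else 0) = w • T := by
          rw [tsum_eq_single 1 (fun m hm => by rw [if_neg hm, smul_zero])]
          simp
        have e2 : ∑' m : ℕ, (starRingEnd ℂ w) ^ m
            • ContinuousLinearMap.adjoint ((0 : H →L[ℂ] H)) = 0 := by
          simp
        rw [e1, e2, add_zero]
    have hbddT : IsBoundedOnDisk (fun w : ℂ => w • T) :=
      ⟨‖T‖, fun w hw => by
        rw [norm_smul]; exact mul_le_of_le_one_left (norm_nonneg T) hw.le⟩
    have hsupT : supNormDisk (fun w : ℂ => w • T) ≤ ‖T‖ := by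
      haveI : Nonempty {v : ℂ // ‖v‖ < 1} := ⟨⟨0, by simp⟩⟩
      refine ciSup_le fun w => ?_
      show ‖w.1 • T‖ ≤ ‖T‖
      rw [norm_smul]; exact mul_le_of_le_one_left (norm_nonneg T) w.2.le
    have hkey := hxB _ _ _ hrepT hbddT {1}
    rw [Finset.sum_singleton] at hkey
    simp only [if_pos rfl, map_zero, norm_zero, add_zero, pow_one] at hkey
    have h2 : ‖U T‖ * x ≤ lam * ‖T‖ :=
      le_trans hkey (mul_le_mul_of_nonneg_left hsupT hlam0)
    rw [le_div_iff₀ (norm_pos_iff.2 hT)]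
    linarith [h2]
  have hAB : ∀ t ∈ SA, ∃ s ∈ SB, t = s / (n:ℝ) := by
    rintro t ⟨r, hr, hgood, rfl⟩
    exact ⟨∑ i, r i,
      (hSBiff _).2 ⟨Finset.sum_nonneg fun i _ => hr i, lemA U hlam hgood⟩, rfl⟩
  have hBA : ∀ s ∈ SB, s / (n:ℝ) ∈ SA := by
    intro s hs
    obtain ⟨hs0, hsc⟩ := (hSBiff s).1 hs
    refine ⟨fun i => if i = ⟨0, hn⟩ then s else 0,
      fun i => by by_cases h : i = (⟨0, hn⟩ : Fin n) <;> simp [h, hs0],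
      lemB U hlam hn hs0 hsc, ?_⟩
    have hsum : (∑ i, if i = (⟨0, hn⟩ : Fin n) then s else 0) = s := by
      rw [Finset.sum_ite_eq' Finset.univ (⟨0, hn⟩ : Fin n) fun _ => s]
      exact if_pos (Finset.mem_univ _)
    rw [hsum]
  have hAne : SA.Nonempty := ⟨0 / (n:ℝ), hBA 0 hB0⟩
  have hAbdd : BddAbove SA := by
    refine ⟨sSup SB / n, ?_⟩
    rintro t ht
    obtain ⟨s, hsB, rfl⟩ := hAB t ht
    exact (div_le_div_iff_of_pos_right hn').2 (le_csSup hBbdd hsB)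
  refine le_antisymm (csSup_le hAne ?_) ?_
  · rintro t ht
    obtain ⟨s, hsB, rfl⟩ := hAB t ht
    exact (div_le_div_iff_of_pos_right hn').2 (le_csSup hBbdd hsB)
  · rw [div_le_iff₀ hn']
    refine csSup_le ⟨0, hB0⟩ ?_
    intro s hs
    have h1 : s / (n:ℝ) ≤ sSup SA := le_csSup hAbdd (hBA s hs)
    calc s = s / (n:ℝ) * n := by field_simp
      _ ≤ sSup SA * n := mul_le_mul_of_nonneg_right h1 hn'.le

end ArithBohr
end
end

section
/- Let λ > 1 and let U be the identity operator on ℂ. Then the one-dimensional λ-powered Bohr radius for bounded complex-valued harmonic functions on the unit disk satisfies R_λ(𝔻,1,ℂ) ≥ (λ−1)π / (4 + (λ−1)π). -/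
open scoped BigOperators ENNReal NNReal Pointwise
open Finset

noncomputable section

namespace ArithBohr


section Statement15Helpers

open Complex MeasureTheory

lemma exp_int_integral (n : ℤ) :
    ∫ θ in (0:ℝ)..(2*Real.pi), Complex.exp (n * θ * Complex.I)
      = if n = 0 then (2*Real.pi : ℂ) else 0 := by
  rcases eq_or_ne n 0 with h | h
  · simp [h]
  · have hc : (n : ℂ) * Complex.I ≠ 0 := by
      simp [Complex.I_ne_zero, Complex.ext_iff, h]
    have heq : ∀ θ : ℝ, Complex.exp (n * θ * Complex.I) = Complex.exp ((n * Complex.I) * θ) := by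
      intro θ; ring_nf
    have hexp : Complex.exp ((n:ℂ) * Complex.I * (2*Real.pi)) = 1 := by
      rw [show (n:ℂ) * Complex.I * (2*Real.pi) = n * (2 * Real.pi * Complex.I) by ring]
      exact Complex.exp_int_mul_two_pi_mul_I n
    simp_rw [heq]
    rw [integral_exp_mul_complex hc]
    push_cast
    rw [hexp]
    simp [h]

lemma abs_cos_periodic : Function.Periodic (fun x => |Real.cos x|) Real.pi := by
  intro x
  simp only [Real.cos_add_pi, abs_neg]

lemma integral_abs_cos : ∫ x in (0:ℝ)..Real.pi, |Real.cos x| = 2 := by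
  have h1 : ∫ x in (0:ℝ)..(Real.pi/2), |Real.cos x| = 1 := by
    rw [intervalIntegral.integral_congr (g := Real.cos)]
    · simp
    · intro x hx
      rw [Set.uIcc_of_le (by positivity)] at hx
      exact abs_of_nonneg (Real.cos_nonneg_of_mem_Icc ⟨by linarith [hx.1, Real.pi_pos], hx.2⟩)
  have h2 : ∫ x in (Real.pi/2)..Real.pi, |Real.cos x| = 1 := by
    rw [intervalIntegral.integral_congr (g := fun x => -Real.cos x)]
    · rw [intervalIntegral.integral_neg]; simp [Real.cos_pi_div_two, Real.cos_pi]
    · intro x hx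
      rw [Set.uIcc_of_le (by linarith [Real.pi_pos])] at hx
      refine abs_of_nonpos (Real.cos_nonpos_of_pi_div_two_le_of_le hx.1 (by linarith [hx.2, Real.pi_pos]))
  rw [← intervalIntegral.integral_add_adjacent_intervals (b := Real.pi/2)
    (Real.continuous_cos.abs.intervalIntegrable _ _) (Real.continuous_cos.abs.intervalIntegrable _ _),
    h1, h2]
  norm_num

lemma integral_abs_cos_shift (m : ℕ) (hm : 1 ≤ m) (c : ℝ) :
    ∫ θ in (0:ℝ)..(2*Real.pi), |Real.cos ((m:ℝ) * θ - c)| = 4 := by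
  have hm0 : (m:ℝ) ≠ 0 := Nat.cast_ne_zero.2 (by omega)
  have hint : ∀ t₁ t₂ : ℝ, IntervalIntegrable (fun x => |Real.cos x|) MeasureTheory.volume t₁ t₂ :=
    fun t₁ t₂ => Real.continuous_cos.abs.intervalIntegrable _ _
  rw [intervalIntegral.integral_comp_mul_sub (fun x => |Real.cos x|) hm0 c]
  have h2 : (m:ℝ) * (2*Real.pi) - c = ((m:ℝ)*0 - c) + ((2*m : ℤ) • Real.pi) := by
    rw [zsmul_eq_mul]; push_cast; ring
  rw [h2, abs_cos_periodic.intervalIntegral_add_zsmul_eq (2*m) _ hint,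
    abs_cos_periodic.intervalIntegral_add_eq _ 0, zero_add, integral_abs_cos]
  rw [smul_eq_mul, zsmul_eq_mul]
  push_cast
  field_simp
  ring

lemma norm_weight (u v : ℂ) (hu : ‖u‖ = 1) (hv : ‖v‖ = 1) (m : ℕ) :
    ∃ c : ℝ, ∀ θ : ℝ,
      ‖u * Complex.exp (-((m:ℝ) * θ) * Complex.I) + v * Complex.exp ((m:ℝ) * θ * Complex.I)‖
        = 2 * |Real.cos ((m:ℝ) * θ - c)| := by
  have hcos : ∀ d : ℂ, Complex.exp (d * Complex.I) + Complex.exp (-(d * Complex.I))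
      = 2 * Complex.cos d := by
    intro d
    rw [show -(d * Complex.I) = (-d) * Complex.I by ring, Complex.exp_mul_I, Complex.exp_mul_I,
      Complex.cos_neg, Complex.sin_neg]
    ring
  obtain ⟨α, hα⟩ : ∃ α : ℝ, u = Complex.exp (α * Complex.I) := by
    refine ⟨u.arg, ?_⟩
    have := Complex.norm_mul_exp_arg_mul_I u
    rwa [hu, Complex.ofReal_one, one_mul,
      eq_comm] at this
  obtain ⟨β, hβ⟩ : ∃ β : ℝ, v = Complex.exp (β * Complex.I) := by
    refine ⟨v.arg, ?_⟩
    have := Complex.norm_mul_exp_arg_mul_I v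
    rwa [hv, Complex.ofReal_one, one_mul,
      eq_comm] at this
  refine ⟨(α - β)/2, fun θ => ?_⟩
  have key : u * Complex.exp (-((m:ℝ) * θ) * Complex.I) + v * Complex.exp ((m:ℝ) * θ * Complex.I)
      = Complex.exp (((α + β)/2 : ℝ) * Complex.I)
        * (2 * Complex.cos (((α - β)/2 - (m:ℝ)*θ : ℝ))) := by
    rw [hα, hβ, ← hcos]
    rw [← Complex.exp_add, ← Complex.exp_add, mul_add, ← Complex.exp_add, ← Complex.exp_add]
    push_cast
    ring_nf
  rw [key, norm_mul]
  have h1 : ‖Complex.exp (((α + β)/2 : ℝ) * Complex.I)‖ = 1 := by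
    rw [Complex.norm_exp_ofReal_mul_I]
  rw [h1, one_mul, ← Complex.ofReal_cos, show ((2:ℂ) * (Real.cos ((α - β)/2 - (m:ℝ)*θ) : ℂ))
    = ((2 * Real.cos ((α - β)/2 - (m:ℝ)*θ) : ℝ) : ℂ) by push_cast; ring, Complex.norm_real]
  rw [Real.norm_eq_abs, abs_mul, show (α - β)/2 - (m:ℝ)*θ = -((m:ℝ)*θ - (α-β)/2) by ring,
    Real.cos_neg]
  norm_num

lemma summable_norm_coeff (a : ℕ → ℂ)
    (h : ∀ z : ℂ, ‖z‖ < 1 → Summable (fun k => a k * z ^ k)) (ρ : ℝ) (h0 : 0 ≤ ρ) (h1 : ρ < 1) :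
    Summable (fun k => ‖a k‖ * ρ ^ k) := by
  obtain ⟨ρ', hρ'0, hρ'1, hρρ'⟩ : ∃ ρ' : ℝ, 0 < ρ' ∧ ρ' < 1 ∧ ρ < ρ' :=
    ⟨(1 + ρ) / 2, by linarith, by linarith, by linarith⟩
  have hs := h (ρ' : ℂ) (by rwa [Complex.norm_real, Real.norm_eq_abs, _root_.abs_of_nonneg hρ'0.le])
  have hb : BddAbove (Set.range fun k => ‖a k * (ρ' : ℂ) ^ k‖) :=
    (hs.tendsto_atTop_zero.norm.bddAbove_range)
  obtain ⟨B, hB⟩ := hb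
  have hBk : ∀ k, ‖a k‖ * ρ' ^ k ≤ B := by
    intro k
    have := hB (Set.mem_range_self (f := fun k => ‖a k * (ρ' : ℂ) ^ k‖) k)
    simpa [norm_mul, norm_pow, Complex.norm_real, Real.norm_eq_abs, _root_.abs_of_nonneg hρ'0.le]
      using this
  refine Summable.of_nonneg_of_le (f := fun k => B * (ρ / ρ') ^ k)
    (fun k => mul_nonneg (norm_nonneg _) (pow_nonneg h0 k)) (fun k => ?_) ?_
  · have hk : ρ ^ k = ρ' ^ k * (ρ / ρ') ^ k := by
      rw [div_pow, mul_comm, div_mul_cancel₀ _ (pow_ne_zero k hρ'0.ne')]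
    rw [hk, ← mul_assoc]
    have h2 : (0:ℝ) ≤ (ρ / ρ') ^ k := pow_nonneg (div_nonneg h0 hρ'0.le) k
    exact mul_le_mul_of_nonneg_right (hBk k) h2
  · exact (summable_geometric_of_lt_one (div_nonneg h0 hρ'0.le) (by
      rw [div_lt_one hρ'0]; exact hρρ')).mul_left B

lemma key_int (s : ℤ) (m : ℕ) (hm : 1 ≤ m) (u v : ℂ) :
    ∫ θ in (0:ℝ)..(2*Real.pi), Complex.exp ((s:ℝ) * θ * Complex.I) *
        (u * Complex.exp (-((m:ℝ)*θ) * Complex.I) + v * Complex.exp ((m:ℝ)*θ*Complex.I))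
      = (if s = (m:ℤ) then 2*Real.pi * u else 0) + (if s = -(m:ℤ) then 2*Real.pi * v else 0) := by
  have heq : ∀ θ : ℝ, Complex.exp ((s:ℝ) * θ * Complex.I) *
        (u * Complex.exp (-((m:ℝ)*θ) * Complex.I) + v * Complex.exp ((m:ℝ)*θ*Complex.I))
      = u * Complex.exp (((s - m : ℤ) : ℝ) * θ * Complex.I)
        + v * Complex.exp (((s + m : ℤ) : ℝ) * θ * Complex.I) := by
    intro θ
    have e1 : Complex.exp (((s - m : ℤ) : ℝ) * θ * Complex.I)
        = Complex.exp ((s:ℝ)*θ*Complex.I) * Complex.exp (-((m:ℝ)*θ)*Complex.I) := by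
      rw [← Complex.exp_add]; congr 1; push_cast; ring
    have e2 : Complex.exp (((s + m : ℤ) : ℝ) * θ * Complex.I)
        = Complex.exp ((s:ℝ)*θ*Complex.I) * Complex.exp (((m:ℝ)*θ)*Complex.I) := by
      rw [← Complex.exp_add]; congr 1; push_cast; ring
    rw [e1, e2]; ring
  simp_rw [heq]
  have hi1 : IntervalIntegrable (fun θ : ℝ => u * Complex.exp (((s - m : ℤ) : ℝ) * θ * Complex.I))
      MeasureTheory.volume 0 (2*Real.pi) := by
    apply Continuous.intervalIntegrable; continuity
  have hi2 : IntervalIntegrable (fun θ : ℝ => v * Complex.exp (((s + m : ℤ) : ℝ) * θ * Complex.I))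
      MeasureTheory.volume 0 (2*Real.pi) := by
    apply Continuous.intervalIntegrable; continuity
  rw [intervalIntegral.integral_add hi1 hi2, intervalIntegral.integral_const_mul,
    intervalIntegral.integral_const_mul]
  have e1 := exp_int_integral (s - m)
  have e2 := exp_int_integral (s + m)
  push_cast at e1 e2 ⊢
  rw [e1, e2]
  have h1 : s - (m:ℤ) = 0 ↔ s = (m:ℤ) := by omega
  have h2 : s + (m:ℤ) = 0 ↔ s = -(m:ℤ) := by omega
  have hm1 : ¬(m = 0) := by omega
  have hm2 : ¬((m:ℤ) = -(m:ℤ)) := by omega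
  have hm3 : ¬(-(m:ℤ) = (m:ℤ)) := by omega
  by_cases hc1 : s = (m:ℤ) <;> by_cases hc2 : s = -(m:ℤ) <;>
      simp [hc1, hc2, h1, h2, sub_eq_zero, add_eq_zero_iff_eq_neg, hm1, hm2, hm3] <;> ring

lemma coeff_bound_aux (f : ℂ → ℂ) (a b : ℕ → ℂ) (M : ℝ)
    (hsum : ∀ z : ℂ, ‖z‖ < 1 → Summable (fun k => a k * z ^ k) ∧
      Summable (fun k => b k * z ^ k) ∧
      f z = (∑' k, a k * z ^ k) + starRingEnd ℂ (∑' k, b k * z ^ k))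
    (hM : ∀ z : ℂ, ‖z‖ < 1 → ‖f z‖ ≤ M)
    (m : ℕ) (hm : 1 ≤ m) (ρ : ℝ) (hρ0 : 0 < ρ) (hρ1 : ρ < 1) :
    (‖a m‖ + ‖b m‖) * ρ ^ m ≤ 4 / Real.pi * M := by
  have hπ := Real.pi_pos
  -- unimodular phases
  set u : ℂ := if a m = 0 then 1 else (starRingEnd ℂ) (a m) / (‖a m‖ : ℂ) with hudef
  set v : ℂ := if b m = 0 then 1 else (b m) / (‖b m‖ : ℂ) with hvdef
  have hu : ‖u‖ = 1 := by
    rw [hudef]; split_ifs with h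
    · simp
    · rw [norm_div, RCLike.norm_conj, Complex.norm_real, Real.norm_eq_abs,
        _root_.abs_of_nonneg (norm_nonneg _), div_self (norm_ne_zero_iff.2 h)]
  have hv : ‖v‖ = 1 := by
    rw [hvdef]; split_ifs with h
    · simp
    · rw [norm_div, Complex.norm_real, Real.norm_eq_abs,
        _root_.abs_of_nonneg (norm_nonneg _), div_self (norm_ne_zero_iff.2 h)]
  have hua : u * a m = (‖a m‖ : ℂ) := by
    rw [hudef]; split_ifs with h
    · simp [h]
    · rw [div_mul_eq_mul_div, mul_comm, Complex.mul_conj]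
      rw [Complex.normSq_eq_norm_sq]
      rw [Complex.ofReal_pow, sq, mul_div_assoc,
        div_self (Complex.ofReal_ne_zero.mpr (norm_ne_zero_iff.2 h)), mul_one]
  have hvb : v * (starRingEnd ℂ) (b m) = (‖b m‖ : ℂ) := by
    rw [hvdef]; split_ifs with h
    · simp [h]
    · rw [div_mul_eq_mul_div, Complex.mul_conj]
      rw [Complex.normSq_eq_norm_sq]
      rw [Complex.ofReal_pow, sq, mul_div_assoc,
        div_self (Complex.ofReal_ne_zero.mpr (norm_ne_zero_iff.2 h)), mul_one]
  -- the weight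
  set w : ℝ → ℂ := fun θ => u * Complex.exp (-((m:ℝ) * θ) * Complex.I)
      + v * Complex.exp ((m:ℝ) * θ * Complex.I) with hwdef
  obtain ⟨c, hwnorm⟩ := norm_weight u v hu hv m
  have hwcont : Continuous w := by
    rw [hwdef]; fun_prop
  have hw2 : ∀ θ, ‖w θ‖ ≤ 2 := by
    intro θ
    rw [hwnorm θ]
    nlinarith [abs_nonneg (Real.cos ((m:ℝ)*θ - c)), Real.abs_cos_le_one ((m:ℝ)*θ - c)]
  -- the circle
  set z : ℝ → ℂ := fun θ => (ρ:ℂ) * Complex.exp (θ * Complex.I) with hzdef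
  have hznorm : ∀ θ : ℝ, ‖z θ‖ = ρ := by
    intro θ
    rw [hzdef]
    simp only [norm_mul, Complex.norm_real, Real.norm_eq_abs,
      Complex.norm_exp_ofReal_mul_I, mul_one, _root_.abs_of_nonneg hρ0.le]
  have hzlt : ∀ θ, ‖z θ‖ < 1 := fun θ => by rw [hznorm]; exact hρ1
  set G : ℕ → ℝ → ℂ :=
    fun k θ => (a k * (z θ)^k + (starRingEnd ℂ) (b k * (z θ)^k)) * w θ with hGdef
  have hpt : ∀ θ, ∑' k, G k θ = f (z θ) * w θ := by
    intro θ
    obtain ⟨hs1, hs2, hfz⟩ := hsum (z θ) (hzlt θ)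
    have hs2' : Summable (fun k => (starRingEnd ℂ) (b k * (z θ)^k)) := hs2.star
    rw [hGdef]
    simp only
    have hstar_tsum : ∑' k, (starRingEnd ℂ) (b k * z θ ^ k)
        = (starRingEnd ℂ) (∑' k, b k * z θ ^ k) := tsum_star.symm
    rw [tsum_mul_right, hs1.tsum_add hs2', hstar_tsum, ← hfz]
  have hGcont : ∀ k, Continuous (G k) := by
    intro k
    rw [hGdef, hzdef]
    refine Continuous.mul (Continuous.add ?_ ?_) hwcont
    · exact continuous_const.mul (((continuous_const.mul
        (Complex.continuous_exp.comp (Complex.continuous_ofReal.mul continuous_const)))).pow k)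
    · exact Complex.continuous_conj.comp (continuous_const.mul (((continuous_const.mul
        (Complex.continuous_exp.comp (Complex.continuous_ofReal.mul continuous_const)))).pow k))
  set μ : MeasureTheory.Measure ℝ := MeasureTheory.volume.restrict (Set.Ioc 0 (2*Real.pi))
    with hμ
  have h2π : (0:ℝ) ≤ 2*Real.pi := by positivity
  have hGint : ∀ k, MeasureTheory.Integrable (G k) μ := by
    intro k
    rw [hμ]
    exact (hGcont k).integrableOn_Ioc
  have hGbound : ∀ k θ, ‖G k θ‖ ≤ (‖a k‖ * ρ^k + ‖b k‖ * ρ^k) * 2 := by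
    intro k θ
    rw [hGdef]
    simp only
    rw [norm_mul]
    refine mul_le_mul ?_ (hw2 θ) (norm_nonneg _) (by positivity)
    refine (norm_add_le _ _).trans ?_
    simp [RCLike.norm_conj, norm_mul, norm_pow, hznorm]
  have hwint0 : MeasureTheory.Integrable (fun θ => M * ‖w θ‖) μ := by
    rw [hμ]
    exact (continuous_const.mul hwcont.norm).integrableOn_Ioc
  have hconstint : ∀ C : ℝ, MeasureTheory.Integrable (fun _ : ℝ => C) μ := by
    intro C
    rw [hμ]
    exact MeasureTheory.integrableOn_const measure_Ioc_lt_top.ne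
  have hμconst : ∀ C : ℝ, (∫ _ : ℝ, C ∂μ) = C * (2*Real.pi) := by
    intro C
    rw [hμ, MeasureTheory.setIntegral_const, MeasureTheory.measureReal_def, Real.volume_Ioc, smul_eq_mul, sub_zero,
      ENNReal.toReal_ofReal h2π, mul_comm]
  have hint_norm : ∀ k, (∫ θ, ‖G k θ‖ ∂μ)
      ≤ ((‖a k‖ * ρ^k + ‖b k‖ * ρ^k) * 2) * (2*Real.pi) := by
    intro k
    calc ∫ θ, ‖G k θ‖ ∂μ ≤ ∫ _θ, ((‖a k‖ * ρ^k + ‖b k‖ * ρ^k) * 2 : ℝ) ∂μ := by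
          refine MeasureTheory.integral_mono_of_nonneg
            (Filter.Eventually.of_forall fun θ => norm_nonneg _) (hconstint _)
            (Filter.Eventually.of_forall fun θ => hGbound k θ)
      _ = ((‖a k‖ * ρ^k + ‖b k‖ * ρ^k) * 2) * (2*Real.pi) := hμconst _
  have hsummable : Summable (fun k => ∫ θ, ‖G k θ‖ ∂μ) := by
    refine Summable.of_nonneg_of_le
      (fun k => MeasureTheory.integral_nonneg fun θ => norm_nonneg _) hint_norm ?_
    have ha' := summable_norm_coeff a (fun z hz => (hsum z hz).1) ρ hρ0.le hρ1
    have hb' := summable_norm_coeff b (fun z hz => (hsum z hz).2.1) ρ hρ0.le hρ1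
    exact ((ha'.add hb').mul_right 2).mul_right (2*Real.pi)
  have hswap := MeasureTheory.integral_tsum_of_summable_integral_norm hGint hsummable
  have hGval : ∀ k, (∫ θ, G k θ ∂μ)
      = if k = m then (2*Real.pi : ℂ) * ((‖a m‖ + ‖b m‖ : ℝ) : ℂ) * (ρ:ℂ)^m else 0 := by
    intro k
    have hexpk : ∀ θ : ℝ, ((ρ:ℂ) * Complex.exp (θ*Complex.I))^k
        = (ρ:ℂ)^k * Complex.exp ((((k:ℤ)):ℝ) * θ * Complex.I) := by
      intro θ
      rw [mul_pow, ← Complex.exp_nat_mul]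
      congr 1
      push_cast
      ring
    have hconj_exp : ∀ θ : ℝ, (starRingEnd ℂ) (Complex.exp ((((k:ℤ)):ℝ) * θ * Complex.I))
        = Complex.exp (((-(k:ℤ)):ℝ) * θ * Complex.I) := by
      intro θ
      rw [← Complex.exp_conj]
      congr 1
      simp only [map_mul, Complex.conj_ofReal, Complex.conj_I]
      push_cast
      ring
    have hGk : ∀ θ : ℝ, G k θ
        = (a k * (ρ:ℂ)^k) * (Complex.exp ((((k:ℤ)):ℝ) * θ * Complex.I) * w θ)
        + ((starRingEnd ℂ) (b k) * (ρ:ℂ)^k)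
            * (Complex.exp (((-(k:ℤ)):ℝ) * θ * Complex.I) * w θ) := by
      intro θ
      rw [hGdef]
      simp only [hzdef]
      simp only [hexpk]
      simp only [map_mul, map_pow, Complex.conj_ofReal, hconj_exp]
      ring
    have hIk1 : IntervalIntegrable
        (fun θ : ℝ => Complex.exp ((((k:ℤ)):ℝ) * θ * Complex.I) * w θ)
        MeasureTheory.volume 0 (2*Real.pi) := by
      apply Continuous.intervalIntegrable
      exact (Complex.continuous_exp.comp (by fun_prop)).mul hwcont
    have hIk2 : IntervalIntegrable
        (fun θ : ℝ => Complex.exp (((-(k:ℤ)):ℝ) * θ * Complex.I) * w θ)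
        MeasureTheory.volume 0 (2*Real.pi) := by
      apply Continuous.intervalIntegrable
      exact (Complex.continuous_exp.comp (by fun_prop)).mul hwcont
    have hres : (∫ θ, G k θ ∂μ) = ∫ θ in (0:ℝ)..(2*Real.pi), G k θ := by
      rw [hμ, intervalIntegral.integral_of_le h2π]
    rw [hres]
    simp_rw [hGk]
    rw [intervalIntegral.integral_add (hIk1.const_mul _) (hIk2.const_mul _),
      intervalIntegral.integral_const_mul, intervalIntegral.integral_const_mul]
    have k1 := key_int (k:ℤ) m hm u v
    have k2 := key_int (-(k:ℤ)) m hm u v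
    simp only [hwdef]
    push_cast at k1 k2 ⊢
    rw [k1, k2]
    rcases eq_or_ne k m with rfl | hkm
    · have c2 : ¬((k:ℤ) = -(k:ℤ)) := by omega
      have c3 : ¬(-(k:ℤ) = (k:ℤ)) := by omega
      simp only [if_pos rfl, if_neg c2, if_neg c3, add_zero, zero_add, if_pos rfl]
      rw [← hua, ← hvb]
      simp only [if_true]
      ring
    · have c1 : ¬((k:ℤ) = (m:ℤ)) := by exact_mod_cast fun h => hkm (Nat.cast_injective h)
      have c2 : ¬((k:ℤ) = -(m:ℤ)) := by omega
      have c3 : ¬(-(k:ℤ) = (m:ℤ)) := by omega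
      have c4 : ¬(-(k:ℤ) = -(m:ℤ)) := by omega
      simp only [if_neg c1, if_neg c2, if_neg c3, if_neg c4, if_neg hkm]
      ring
  have hsum_val : (∑' k, ∫ θ, G k θ ∂μ)
      = (2*Real.pi : ℂ) * ((‖a m‖ + ‖b m‖ : ℝ) : ℂ) * (ρ:ℂ)^m := by
    rw [tsum_eq_single m (fun k hk => by rw [hGval k, if_neg hk])]
    rw [hGval m, if_pos rfl]
  have hnorm1 : ‖∫ θ, (∑' k, G k θ) ∂μ‖ ≤ ∫ θ, M * ‖w θ‖ ∂μ := by
    refine (MeasureTheory.norm_integral_le_integral_norm _).trans ?_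
    refine MeasureTheory.integral_mono_of_nonneg
      (Filter.Eventually.of_forall fun θ => norm_nonneg _) hwint0
      (Filter.Eventually.of_forall fun θ => ?_)
    show ‖∑' k, G k θ‖ ≤ M * ‖w θ‖
    rw [hpt θ, norm_mul]
    exact mul_le_mul_of_nonneg_right (hM _ (hzlt θ)) (norm_nonneg _)
  have hwint : (∫ θ, M * ‖w θ‖ ∂μ) = M * 8 := by
    rw [MeasureTheory.integral_const_mul]
    congr 1
    have : (∫ θ, ‖w θ‖ ∂μ) = ∫ θ in (0:ℝ)..(2*Real.pi), ‖w θ‖ := by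
      rw [hμ, intervalIntegral.integral_of_le h2π]
    rw [this]
    have hwn : ∀ θ : ℝ, ‖w θ‖ = 2 * |Real.cos ((m:ℝ)*θ - c)| := fun θ => hwnorm θ
    simp_rw [hwn]
    rw [intervalIntegral.integral_const_mul, integral_abs_cos_shift m hm c]
    norm_num
  have hfinal : 2*Real.pi * ((‖a m‖ + ‖b m‖)) * ρ^m ≤ M * 8 := by
    have hval : ‖(2*Real.pi : ℂ) * ((‖a m‖ + ‖b m‖ : ℝ) : ℂ) * (ρ:ℂ)^m‖
        = 2*Real.pi * ((‖a m‖ + ‖b m‖)) * ρ^m := by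
      have : (2*Real.pi : ℂ) * ((‖a m‖ + ‖b m‖ : ℝ) : ℂ) * (ρ:ℂ)^m
          = ((2*Real.pi * (‖a m‖ + ‖b m‖) * ρ^m : ℝ) : ℂ) := by push_cast; ring
      rw [this, Complex.norm_real, Real.norm_eq_abs, _root_.abs_of_nonneg]
      positivity
    calc 2*Real.pi * ((‖a m‖ + ‖b m‖)) * ρ^m
        = ‖(2*Real.pi : ℂ) * ((‖a m‖ + ‖b m‖ : ℝ) : ℂ) * (ρ:ℂ)^m‖ := hval.symm
      _ = ‖∫ θ, (∑' k, G k θ) ∂μ‖ := by rw [← hsum_val, hswap]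
      _ ≤ ∫ θ, M * ‖w θ‖ ∂μ := hnorm1
      _ = M * 8 := hwint
  have hM0 : 0 ≤ M := le_trans (norm_nonneg _) (hM 0 (by simp))
  rw [div_mul_eq_mul_div, le_div_iff₀ hπ]
  nlinarith [hfinal]


lemma coeff_bound (f : ℂ → ℂ) (a b : ℕ → ℂ) (M : ℝ)
    (hsum : ∀ z : ℂ, ‖z‖ < 1 → Summable (fun k => a k * z ^ k) ∧
      Summable (fun k => b k * z ^ k) ∧
      f z = (∑' k, a k * z ^ k) + starRingEnd ℂ (∑' k, b k * z ^ k))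
    (hM : ∀ z : ℂ, ‖z‖ < 1 → ‖f z‖ ≤ M)
    (m : ℕ) (hm : 1 ≤ m) : ‖a m‖ + ‖b m‖ ≤ 4 / Real.pi * M := by
  have htend : Filter.Tendsto (fun ρ : ℝ => (‖a m‖ + ‖b m‖) * ρ ^ m)
      (nhdsWithin 1 (Set.Iio 1)) (nhds ((‖a m‖ + ‖b m‖) * 1 ^ m)) :=
    ((continuous_const.mul (continuous_pow m)).tendsto 1).mono_left nhdsWithin_le_nhds
  have hev : ∀ᶠ ρ in nhdsWithin (1:ℝ) (Set.Iio 1),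
      (‖a m‖ + ‖b m‖) * ρ ^ m ≤ 4 / Real.pi * M := by
    filter_upwards [Ioo_mem_nhdsLT_of_mem (show (1:ℝ) ∈ Set.Ioc 0 1 by norm_num)] with ρ hρ
    exact coeff_bound_aux f a b M hsum hM m hm ρ hρ.1 hρ.2
  have := le_of_tendsto htend hev
  simpa using this

end Statement15Helpers

/-- Lemma `lem-1.1`: for `λ > 1`,
`R_λ(𝔻,1,ℂ) ≥ (λ-1)π / (4 + (λ-1)π)`. -/
theorem statement15 (lam : ℝ) (hlam : 1 < lam) :
    (lam - 1) * Real.pi / (4 + (lam - 1) * Real.pi) ≤ BohrRadiusDiskC lam := by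
  have hπ := Real.pi_pos
  set r : ℝ := (lam - 1) * Real.pi / (4 + (lam - 1) * Real.pi) with hr
  have hD : 0 < 4 + (lam - 1) * Real.pi := by nlinarith
  have hr0 : 0 ≤ r := by
    rw [hr]; exact div_nonneg (by nlinarith) hD.le
  have hr1 : r < 1 := by
    rw [hr, div_lt_one hD]; nlinarith
  apply le_csSup
  · -- bounded above
    refine ⟨lam, fun t ht => ?_⟩
    obtain ⟨ht0, hcond⟩ := ht
    set a : ℕ → ℂ := fun m => if m = 1 then 1 else 0 with ha
    have hrepr : RepresentsDiskC (fun z => z) a (fun _ => 0) := by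
      refine ⟨rfl, fun z hz => ?_⟩
      have hsa : Summable (fun m => a m * z ^ m) := by
        refine summable_of_ne_finset_zero (s := {1}) fun m hm => ?_
        simp only [Finset.mem_singleton] at hm
        simp [ha, hm]
      refine ⟨hsa, by simpa using summable_zero, ?_⟩
      have h1 : (∑' m, a m * z ^ m) = z := by
        rw [tsum_eq_single 1 (fun m hm => by simp [ha, hm])]
        simp [ha]
      have h2 : (∑' m : ℕ, (0:ℂ) * z ^ m) = 0 := by simp
      rw [h1, h2]
      simp
    have hbdd : IsBoundedOnDisk (fun z : ℂ => z) := ⟨1, fun z hz => hz.le⟩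
    have h1 := hcond _ _ _ hrepr hbdd {1}
    haveI : Nonempty {w : ℂ // ‖w‖ < 1} := ⟨⟨0, by simp⟩⟩
    have hsup : supNormDisk (fun z : ℂ => z) ≤ 1 := ciSup_le fun z => z.2.le
    simp only [Finset.sum_singleton, ha, if_pos rfl, norm_one, norm_zero, add_zero,
      pow_one] at h1
    norm_num at h1
    have h2 : lam * supNormDisk (fun z : ℂ => z) ≤ lam * 1 :=
      mul_le_mul_of_nonneg_left hsup (by linarith)
    linarith
  · -- membership
    refine ⟨hr0, fun f a b hrep hbdd F => ?_⟩
    set M := supNormDisk f with hMdef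
    have hMb : ∀ z : ℂ, ‖z‖ < 1 → ‖f z‖ ≤ M := by
      intro z hz
      obtain ⟨B, hB⟩ := hbdd
      have hba : BddAbove (Set.range fun z : {w : ℂ // ‖w‖ < 1} => ‖f z.1‖) :=
        ⟨B, by rintro x ⟨z, rfl⟩; exact hB z.1 z.2⟩
      exact le_ciSup hba (⟨z, hz⟩ : {w : ℂ // ‖w‖ < 1})
    have hM0 : 0 ≤ M := le_trans (norm_nonneg _) (hMb 0 (by simp))
    obtain ⟨hb0, hrep'⟩ := hrep
    have ha0 : ‖a 0‖ ≤ M := by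
      obtain ⟨_, _, hf0⟩ := hrep' 0 (by simp)
      have e1 : (∑' k, a k * (0:ℂ) ^ k) = a 0 := by
        rw [tsum_eq_single 0 (fun k hk => by simp [zero_pow hk])]
        simp
      have e2 : (∑' k, b k * (0:ℂ) ^ k) = b 0 := by
        rw [tsum_eq_single 0 (fun k hk => by simp [zero_pow hk])]
        simp
      rw [e1, e2, hb0, map_zero, add_zero] at hf0
      rw [← hf0]
      exact hMb 0 (by simp)
    have hcoeff : ∀ m : ℕ, 1 ≤ m → ‖a m‖ + ‖b m‖ ≤ 4 / Real.pi * M :=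
      fun m hm => coeff_bound f a b M (fun z hz => hrep' z hz) hMb m hm
    set g : ℕ → ℝ := fun m => if m = 0 then M else (4 / Real.pi * M) * r ^ m with hg
    have hgnn : ∀ m, 0 ≤ g m := by
      intro m
      simp only [hg]
      split_ifs
      · exact hM0
      · have : 0 ≤ 4 / Real.pi * M := by positivity
        exact mul_nonneg this (pow_nonneg hr0 m)
    have hterm : ∀ m ∈ F, (‖a m‖ + ‖b m‖) * r ^ m ≤ g m := by
      intro m _
      rcases Nat.eq_zero_or_pos m with rfl | hm
      · simp only [hg, if_pos rfl, pow_zero, mul_one, hb0, norm_zero, add_zero]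
        exact ha0
      · simp only [hg, if_neg (Nat.pos_iff_ne_zero.mp hm)]
        exact mul_le_mul_of_nonneg_right (hcoeff m hm) (pow_nonneg hr0 m)
    have hgsummable : Summable g := by
      refine Summable.of_nonneg_of_le hgnn (fun m => ?_)
        ((summable_geometric_of_lt_one hr0 hr1).mul_left (M + 4 / Real.pi * M))
      rcases Nat.eq_zero_or_pos m with rfl | hm
      · simp only [hg, if_pos rfl, pow_zero, mul_one]
        have : 0 ≤ 4 / Real.pi * M := by positivity
        linarith
      · simp only [hg, if_neg (Nat.pos_iff_ne_zero.mp hm)]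
        have h1 : 0 ≤ r ^ m := pow_nonneg hr0 m
        have h2 : r ^ m ≤ 1 := pow_le_one₀ hr0 hr1.le
        nlinarith
    have hval : (∑' m, g m) = M + (4 / Real.pi * M) * r * (1 - r)⁻¹ := by
      rw [hgsummable.tsum_eq_zero_add]
      have h0 : g 0 = M := by simp [hg]
      have hsucc : ∀ n : ℕ, g (n + 1) = ((4 / Real.pi * M) * r) * r ^ n := by
        intro n
        simp only [hg, Nat.succ_ne_zero, if_false, pow_succ]
        ring
      rw [h0]
      congr 1
      rw [tsum_congr hsucc, tsum_mul_left, tsum_geometric_of_lt_one hr0 hr1]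
    have h1r : (1:ℝ) - r = 4 / (4 + (lam - 1) * Real.pi) := by
      rw [hr]
      field_simp
      ring
    have hgeom : (4 / Real.pi * M) * r * (1 - r)⁻¹ = (lam - 1) * M := by
      calc (4 / Real.pi * M) * r * (1 - r)⁻¹
          = (lam - 1) * M * (Real.pi / Real.pi)
            * ((4 + (lam - 1) * Real.pi) / (4 + (lam - 1) * Real.pi)) := by
              rw [h1r, hr, inv_div]; ring
        _ = (lam - 1) * M := by rw [div_self hπ.ne', div_self hD.ne']; ring
    calc ∑ m ∈ F, (‖a m‖ + ‖b m‖) * r ^ m ≤ ∑ m ∈ F, g m := Finset.sum_le_sum hterm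
      _ ≤ ∑' m, g m := hgsummable.sum_le_tsum F (fun m _ => hgnn m)
      _ = M + (4 / Real.pi * M) * r * (1 - r)⁻¹ := hval
      _ = lam * M := by rw [hgeom]; ring


end ArithBohr
end
end

section
/- Let Z = (ℂ^n,‖·‖) be a complex Banach space whose canonical basis is 1-unconditional, let X and Y be complex Banach spaces, U : X → Y a non-null bounded linear operator, 1 ≤ p < ∞ and λ ≥ 1 with ‖U‖ ≤ λ. Then A_λ(B_Z,p,U) ≥ (‖Id : Z → ℓ^n_1‖ / n) · K_λ(B_Z,p,U). -/
open scoped BigOperators ENNReal NNReal Pointwise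
open Finset

noncomputable section

namespace ArithBohr

section AuxLemmas

variable {n : ℕ}

/-- The `i`-th canonical basis vector of `ℂ^n`. -/
def basisVec (i : Fin n) : Fin n → ℂ := fun j => if j = i then 1 else 0

/-- The multi-index `e_i`. -/
def unitIdx (i : Fin n) : Fin n → ℕ := fun j => if j = i then 1 else 0

lemma mono_unitIdx (z : Fin n → ℂ) (i : Fin n) : mono z (unitIdx i) = z i := by
  unfold mono unitIdx
  rw [Finset.prod_eq_single i (fun j _ hj => by simp [hj])
    (fun h => absurd (Finset.mem_univ i) h)]
  simp

lemma monoR_unitIdx (r : Fin n → ℝ) (i : Fin n) : monoR r (unitIdx i) = r i := by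
  unfold monoR unitIdx
  rw [Finset.prod_eq_single i (fun j _ hj => by simp [hj])
    (fun h => absurd (Finset.mem_univ i) h)]
  simp

lemma monoR_nonneg {r : Fin n → ℝ} (hr : ∀ i, 0 ≤ r i) (α : Fin n → ℕ) : 0 ≤ monoR r α :=
  Finset.prod_nonneg fun i _ => pow_nonneg (hr i) _

lemma mono_zero_eq (α : Fin n → ℕ) :
    mono (0 : Fin n → ℂ) α = if α = 0 then 1 else 0 := by
  unfold mono
  by_cases h : α = 0
  · simp [h]
  · obtain ⟨i, hi⟩ := Function.ne_iff.1 h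
    simp only [Pi.zero_apply] at hi
    rw [if_neg h]
    exact Finset.prod_eq_zero (Finset.mem_univ i) (by simp [zero_pow hi])

lemma monoR_zero_eq (α : Fin n → ℕ) :
    monoR (0 : Fin n → ℝ) α = if α = 0 then 1 else 0 := by
  unfold monoR
  by_cases h : α = 0
  · simp [h]
  · obtain ⟨i, hi⟩ := Function.ne_iff.1 h
    simp only [Pi.zero_apply] at hi
    rw [if_neg h]
    exact Finset.prod_eq_zero (Finset.mem_univ i) (by simp [zero_pow hi])

lemma UncondNorm.N_nonneg (Z : UncondNorm n) (z : Fin n → ℂ) : 0 ≤ Z.N z := by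
  have h0 : Z.N 0 = 0 := (Z.eq_zero_iff 0).2 rfl
  have hneg : Z.N (-z) = Z.N z := by
    have h := Z.smul_eq (-1) z
    simpa using h
  have h2 := Z.add_le z (-z)
  rw [add_neg_cancel, h0, hneg] at h2
  linarith

lemma UncondNorm.zero_mem_ball (Z : UncondNorm n) : (0 : Fin n → ℂ) ∈ Z.ball := by
  have h0 : Z.N 0 = 0 := (Z.eq_zero_iff 0).2 rfl
  simp [UncondNorm.ball, h0]

lemma UncondNorm.coord_le (Z : UncondNorm n) (z : Fin n → ℂ) (i : Fin n) :
    ‖z i‖ * Z.N (basisVec i) ≤ Z.N z := by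
  have h := Z.uncond (fun j => if j = i then 1 else 0) z
    (by intro j; split <;> simp)
  have heq : (fun j => (if j = i then (1 : ℂ) else 0) * z j) = z i • basisVec i := by
    funext j
    by_cases hj : j = i
    · subst hj; simp [basisVec]
    · simp [basisVec, hj]
  rw [heq, Z.smul_eq] at h
  exact h

lemma UncondNorm.basis_pos (Z : UncondNorm n) (i : Fin n) : 0 < Z.N (basisVec i) := by
  refine (Z.N_nonneg _).lt_of_ne (fun h => ?_)
  have hz : basisVec (n := n) i = 0 := (Z.eq_zero_iff _).1 h.symm
  have := congrFun hz i
  simp [basisVec] at this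

lemma UncondNorm.abs_mem_ball (Z : UncondNorm n) {z : Fin n → ℂ} (hz : z ∈ Z.ball) :
    (fun i => (‖z i‖ : ℂ)) ∈ Z.ball := by
  set ξ : Fin n → ℂ := fun i => if z i = 0 then 0 else (‖z i‖ : ℂ) * (z i)⁻¹ with hξ
  have hξle : ∀ i, ‖ξ i‖ ≤ 1 := by
    intro i
    by_cases h0 : z i = 0
    · simp [hξ, h0]
    · have : ‖ξ i‖ = ‖z i‖ * ‖z i‖⁻¹ := by
        simp [hξ, h0, norm_mul, norm_inv]
      rw [this, mul_inv_cancel₀ (norm_ne_zero_iff.2 h0)]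
  have h := Z.uncond ξ z hξle
  have heq : (fun i => ξ i * z i) = fun i => (‖z i‖ : ℂ) := by
    funext i
    by_cases h0 : z i = 0
    · simp [hξ, h0]
    · rw [hξ]; dsimp only; rw [if_neg h0]; exact inv_mul_cancel_right₀ h0 _
  rw [heq] at h
  exact lt_of_le_of_lt h hz

lemma supNorm_nonneg' {E : Type*} [SeminormedAddGroup E] (Ω : Set (Fin n → ℂ))
    (f : (Fin n → ℂ) → E) : 0 ≤ supNorm Ω f :=
  Real.iSup_nonneg fun _ => norm_nonneg _

lemma norm_le_supNorm' {E : Type*} [SeminormedAddGroup E] {Ω : Set (Fin n → ℂ)}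
    {f : (Fin n → ℂ) → E} (hb : IsBoundedOn Ω f) {z : Fin n → ℂ} (hz : z ∈ Ω) :
    ‖f z‖ ≤ supNorm Ω f := by
  obtain ⟨M, hM⟩ := hb
  exact le_ciSup ⟨M, by rintro y ⟨w, rfl⟩; exact hM w.1 w.2⟩ (⟨z, hz⟩ : Ω)

lemma supNorm_le' {E : Type*} [SeminormedAddGroup E] {Ω : Set (Fin n → ℂ)} [Nonempty Ω]
    {f : (Fin n → ℂ) → E} {M : ℝ} (h : ∀ z ∈ Ω, ‖f z‖ ≤ M) : supNorm Ω f ≤ M :=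
  ciSup_le fun z => h z.1 z.2

variable {X : Type*} [NormedAddCommGroup X] [NormedSpace ℂ X]

lemma repr_coeff_zero (Z : UncondNorm n) {f : (Fin n → ℂ) → X} {a : (Fin n → ℕ) → X}
    (hf : RepresentsHol Z.ball f a) : f 0 = a 0 := by
  have h := hf 0 Z.zero_mem_ball
  have heq : (fun α => mono (0 : Fin n → ℂ) α • a α) = fun α => if α = 0 then a 0 else 0 := by
    funext α
    rw [mono_zero_eq]
    by_cases hα : α = 0 <;> simp [hα]
  rw [heq] at h
  exact h.unique (hasSum_ite_eq 0 (a 0))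

end AuxLemmas

/-- Theorem `thm-1.8-atm-holo`: for `X`-valued holomorphic functions,
`A_λ(B_Z,p,U) ≥ (‖Id : Z → ℓ^n_1‖ / n) · K_λ(B_Z,p,U)`. -/
theorem statement17 {n : ℕ} (hn : 0 < n) (Z : UncondNorm n)
    {X : Type*} [NormedAddCommGroup X] [NormedSpace ℂ X] [CompleteSpace X]
    {Y : Type*} [NormedAddCommGroup Y] [NormedSpace ℂ Y] [CompleteSpace Y]
    (U : X →L[ℂ] Y) (hU : U ≠ 0)
    (p lam : ℝ) (hp : 1 ≤ p) (hlam : 1 ≤ lam) (hUlam : ‖U‖ ≤ lam) :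
    Z.toL1 / n * Kradius Z.ball p lam U ≤ Aradius Z.ball p lam U := by
  classical
  have hp0 : (0:ℝ) < p := by linarith
  have hp0' : p ≠ 0 := ne_of_gt hp0
  have hlam0 : (0:ℝ) ≤ lam := by linarith
  have hnR : (0:ℝ) < n := by exact_mod_cast hn
  haveI : Nonempty Z.ball := ⟨⟨0, Z.zero_mem_ball⟩⟩
  set SA : Set ℝ := {t : ℝ | ∃ r : Fin n → ℝ, (∀ i, 0 ≤ r i) ∧
    (∀ f a, RepresentsHol Z.ball f a → IsBoundedOn Z.ball f →
      ∀ F : Finset (Fin n → ℕ),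
        ∑ α ∈ F, ‖U (a α)‖ ^ p * monoR r α ^ p ≤ lam ^ p * supNorm Z.ball f ^ p) ∧
    t = (∑ i, r i) / n} with hSAdef
  set SK : Set ℝ := {r : ℝ | 0 ≤ r ∧ ∀ f a, RepresentsHol Z.ball f a → IsBoundedOn Z.ball f →
    ∀ z ∈ Z.ball, ∀ F : Finset (Fin n → ℕ),
      ∑ α ∈ F, ‖mono (r • z) α • U (a α)‖ ^ p ≤ lam ^ p * supNorm Z.ball f ^ p} with hSKdef
  have hAeq : Aradius Z.ball p lam U = sSup SA := by rw [hSAdef]; rfl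
  have hKeq : Kradius Z.ball p lam U = sSup SK := by rw [hSKdef]; rfl
  -- the bound on the constant coefficient
  have hcoeff : ∀ (f : (Fin n → ℂ) → X) (a : (Fin n → ℕ) → X),
      RepresentsHol Z.ball f a → IsBoundedOn Z.ball f →
      ‖U (a 0)‖ ^ p ≤ lam ^ p * supNorm Z.ball f ^ p := by
    intro f a hf hb
    have h1 : ‖U (a 0)‖ ≤ lam * supNorm Z.ball f := by
      rw [← repr_coeff_zero Z hf]
      calc ‖U (f 0)‖ ≤ ‖U‖ * ‖f 0‖ := U.le_opNorm _
        _ ≤ lam * supNorm Z.ball f :=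
            mul_le_mul hUlam (norm_le_supNorm' hb Z.zero_mem_ball) (norm_nonneg _) hlam0
    calc ‖U (a 0)‖ ^ p ≤ (lam * supNorm Z.ball f) ^ p :=
          Real.rpow_le_rpow (norm_nonneg _) h1 hp0.le
      _ = lam ^ p * supNorm Z.ball f ^ p :=
          Real.mul_rpow hlam0 (supNorm_nonneg' _ _)
  -- 0 belongs to SK
  have h0SK : (0:ℝ) ∈ SK := by
    rw [hSKdef]
    refine ⟨le_refl 0, fun f a hf hb z hz F => ?_⟩
    rw [zero_smul]
    calc ∑ α ∈ F, ‖mono (0 : Fin n → ℂ) α • U (a α)‖ ^ p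
        ≤ ∑ α ∈ F, (if α = 0 then ‖U (a 0)‖ ^ p else 0) := by
          refine Finset.sum_le_sum fun α _ => ?_
          rw [mono_zero_eq]
          by_cases hα : α = 0
          · simp [hα]
          · simp [hα, Real.zero_rpow hp0']
      _ = if (0 : Fin n → ℕ) ∈ F then ‖U (a 0)‖ ^ p else 0 := Finset.sum_ite_eq' F 0 _
      _ ≤ ‖U (a 0)‖ ^ p := by
          split
          · exact le_rfl
          · positivity
      _ ≤ lam ^ p * supNorm Z.ball f ^ p := hcoeff f a hf hb
  -- 0 belongs to SA
  have h0SA : (0:ℝ) ∈ SA := by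
    rw [hSAdef]
    refine ⟨0, fun _ => le_refl 0, ?_, by simp⟩
    intro f a hf hb F
    calc ∑ α ∈ F, ‖U (a α)‖ ^ p * monoR (0 : Fin n → ℝ) α ^ p
        ≤ ∑ α ∈ F, (if α = 0 then ‖U (a 0)‖ ^ p else 0) := by
          refine Finset.sum_le_sum fun α _ => ?_
          rw [monoR_zero_eq]
          by_cases hα : α = 0
          · simp [hα]
          · simp [hα, Real.zero_rpow hp0']
      _ = if (0 : Fin n → ℕ) ∈ F then ‖U (a 0)‖ ^ p else 0 := Finset.sum_ite_eq' F 0 _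
      _ ≤ ‖U (a 0)‖ ^ p := by
          split
          · exact le_rfl
          · positivity
      _ ≤ lam ^ p * supNorm Z.ball f ^ p := hcoeff f a hf hb
  -- SA is bounded above, via the test functions z ↦ z i • x
  obtain ⟨x, hx⟩ : ∃ x : X, U x ≠ 0 := by
    by_contra h
    push_neg at h
    exact hU (ContinuousLinearMap.ext fun x => by simp [h x])
  have hc : 0 < ‖U x‖ := norm_pos_iff.2 hx
  have hrepr : ∀ i : Fin n, RepresentsHol Z.ball (fun z => z i • x)
      (fun α => if α = unitIdx i then x else 0) := by
    intro i w hw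
    show HasSum (fun α => mono w α • if α = unitIdx i then x else 0) (w i • x)
    have heq : (fun α => mono w α • if α = unitIdx i then x else 0)
        = fun α => if α = unitIdx i then w i • x else 0 := by
      funext α
      by_cases hα : α = unitIdx i
      · simp [hα, mono_unitIdx]
      · simp [hα]
    rw [heq]
    exact hasSum_ite_eq (unitIdx i) (w i • x)
  have hcoordb : ∀ (i : Fin n), ∀ w ∈ Z.ball, ‖w i‖ ≤ (Z.N (basisVec i))⁻¹ := by
    intro i w hw
    have h1 := Z.coord_le w i
    have h2 : Z.N w ≤ 1 := le_of_lt hw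
    rw [← one_div]
    exact (le_div_iff₀ (Z.basis_pos i)).2 (h1.trans h2)
  have hbddon : ∀ i : Fin n, IsBoundedOn Z.ball (fun z => z i • x) := by
    intro i
    refine ⟨(Z.N (basisVec i))⁻¹ * ‖x‖, fun w hw => ?_⟩
    show ‖w i • x‖ ≤ _
    rw [norm_smul]
    exact mul_le_mul_of_nonneg_right (hcoordb i w hw) (norm_nonneg x)
  have hSi : ∀ i : Fin n, supNorm Z.ball (fun z => z i • x) ≤ (Z.N (basisVec i))⁻¹ * ‖x‖ := by
    intro i
    refine supNorm_le' fun w hw => ?_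
    show ‖w i • x‖ ≤ _
    rw [norm_smul]
    exact mul_le_mul_of_nonneg_right (hcoordb i w hw) (norm_nonneg x)
  have hAbdd : BddAbove SA := by
    refine ⟨(∑ i, lam * ((Z.N (basisVec i))⁻¹ * ‖x‖) / ‖U x‖) / n, ?_⟩
    rintro t ht
    rw [hSAdef] at ht
    obtain ⟨r, hr0, hgood, rfl⟩ := ht
    have hri : ∀ i, r i ≤ lam * ((Z.N (basisVec i))⁻¹ * ‖x‖) / ‖U x‖ := by
      intro i
      have h := hgood _ _ (hrepr i) (hbddon i) {unitIdx i}
      simp only [Finset.sum_singleton, monoR_unitIdx, eq_self_iff_true, if_true] at h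
      set S := supNorm Z.ball (fun z => z i • x) with hS
      have hS0 : 0 ≤ S := supNorm_nonneg' _ _
      rw [← Real.mul_rpow hc.le (hr0 i), ← Real.mul_rpow hlam0 hS0] at h
      have h2 : ‖U x‖ * r i ≤ lam * S :=
        (Real.rpow_le_rpow_iff (mul_nonneg hc.le (hr0 i)) (mul_nonneg hlam0 hS0) hp0).1 h
      have h3 : r i ≤ lam * S / ‖U x‖ := by
        rw [le_div_iff₀ hc]
        linarith
      refine h3.trans ?_
      have h4 : lam * S ≤ lam * ((Z.N (basisVec i))⁻¹ * ‖x‖) :=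
        mul_le_mul_of_nonneg_left (hSi i) hlam0
      rw [div_le_div_iff₀ hc hc]
      nlinarith [hc.le]
    have hsum : ∑ i, r i ≤ ∑ i, lam * ((Z.N (basisVec i))⁻¹ * ‖x‖) / ‖U x‖ :=
      Finset.sum_le_sum fun i _ => hri i
    rw [div_le_div_iff₀ hnR hnR]
    nlinarith [hnR.le]
  -- the key step: transporting a good K-radius
  have hkey : ∀ r ∈ SK, ∀ z ∈ Z.ball, (r * ∑ i, ‖z i‖) / n ∈ SA := by
    intro r hr z hz
    rw [hSKdef] at hr
    obtain ⟨hr0, hrP⟩ := hr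
    rw [hSAdef]
    refine ⟨fun i => r * ‖z i‖, fun i => mul_nonneg hr0 (norm_nonneg _), ?_, by
      rw [Finset.mul_sum]⟩
    intro f a hf hb F
    have h := hrP f a hf hb (fun i => (‖z i‖ : ℂ)) (Z.abs_mem_ball hz) F
    refine le_trans (le_of_eq (Finset.sum_congr rfl fun α _ => ?_)) h
    have hm : ‖mono (r • fun i => (‖z i‖ : ℂ)) α‖ = monoR (fun i => r * ‖z i‖) α := by
      unfold mono monoR
      rw [norm_prod]
      refine Finset.prod_congr rfl fun i _ => ?_
      rw [norm_pow]
      congr 1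
      simp [norm_smul, Real.norm_eq_abs, abs_of_nonneg hr0]
    rw [norm_smul, hm,
      Real.mul_rpow (monoR_nonneg (fun i => mul_nonneg hr0 (norm_nonneg _)) α) (norm_nonneg _),
      mul_comm]
  -- assembling everything
  rw [hAeq, hKeq]
  have hT0 : 0 ≤ Z.toL1 := by
    unfold UncondNorm.toL1
    exact Real.iSup_nonneg fun z => Finset.sum_nonneg fun i _ => norm_nonneg _
  have hA0 : 0 ≤ sSup SA := le_csSup hAbdd h0SA
  have hstep : ∀ r ∈ SK, r * Z.toL1 / n ≤ sSup SA := by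
    intro r hr
    have hr0 : 0 ≤ r := by rw [hSKdef] at hr; exact hr.1
    rcases eq_or_lt_of_le hr0 with h | hrpos
    · rw [← h]
      simpa using hA0
    · have hzle : ∀ z : Z.ball, ∑ i, ‖z.1 i‖ ≤ sSup SA * n / r := by
        intro z
        have hmem := hkey r hr z.1 z.2
        have hle := le_csSup hAbdd hmem
        have h2 : r * (∑ i, ‖z.1 i‖) ≤ sSup SA * n := by
          rw [div_le_iff₀ hnR] at hle
          exact hle
        rw [le_div_iff₀ hrpos]
        linarith
      have hTle : Z.toL1 ≤ sSup SA * n / r := by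
        unfold UncondNorm.toL1
        exact ciSup_le hzle
      have h5 : r * Z.toL1 ≤ r * (sSup SA * n / r) := mul_le_mul_of_nonneg_left hTle hr0
      have h6 : r * (sSup SA * n / r) / n = sSup SA := by
        field_simp
      calc r * Z.toL1 / n ≤ r * (sSup SA * n / r) / n := by
            rw [div_le_div_iff₀ hnR hnR]
            nlinarith [hnR.le]
        _ = sSup SA := h6
  rcases eq_or_lt_of_le hT0 with hT | hTpos
  · rw [← hT]
    simpa using hA0
  · have hKle : sSup SK ≤ sSup SA * n / Z.toL1 := by
      refine csSup_le ⟨0, h0SK⟩ fun r hr => ?_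
      have h7 := hstep r hr
      rw [le_div_iff₀ hTpos]
      have h8 : r * Z.toL1 ≤ sSup SA * n := by
        rw [div_le_iff₀ hnR] at h7
        exact h7
      linarith
    have h9 : Z.toL1 / n * sSup SK ≤ Z.toL1 / n * (sSup SA * n / Z.toL1) :=
      mul_le_mul_of_nonneg_left hKle (by positivity)
    calc Z.toL1 / ↑n * sSup SK ≤ Z.toL1 / ↑n * (sSup SA * ↑n / Z.toL1) := h9
      _ = sSup SA := by
          field_simp

end ArithBohr
end
end
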